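/- arXiv:2302.13767 — 3 statements merged into one kernel-verified Lean document; each statement's English description precedes it below -/
import Mathlib

section
/- For n ≥ 0, the number of Fishburn permutations of length n avoiding the classical patterns 321, 2143, and 4123 equals C(n,2) + 1. -/
/-- A permutation `π` of `Fin n` contains the classical pattern `p` (given as a
function `Fin k → ℕ` listing the pattern's entries). -/
def Contains {n k : ℕ} (π : Equiv.Perm (Fin n)) (p : Fin k → ℕ) : Prop :=
  ∃ f : Fin k → Fin n, StrictMono f ∧ ∀ i j, p i < p j ↔ π (f i) < π (f j)

/-- Classical pattern avoidance. -/
def Avoids {n k : ℕ} (π : Equiv.Perm (Fin n)) (p : Fin k → ℕ) : Prop :=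
  ¬ Contains π p

/-- A permutation is Fishburn if there are no indices `i < j` with
`π i, π (i+1), π j` forming a 231 pattern and `π i = π j + 1`. -/
def IsFishburn {n : ℕ} (π : Equiv.Perm (Fin n)) : Prop :=
  ¬ ∃ (i j : ℕ) (hij : i + 1 < j) (hj : j < n),
      π ⟨i, by omega⟩ < π ⟨i + 1, by omega⟩ ∧
      π ⟨j, hj⟩ < π ⟨i, by omega⟩ ∧
      (π ⟨i, by omega⟩ : ℕ) = (π ⟨j, hj⟩ : ℕ) + 1

/-!
Let `a` be the first point moved by `π ≠ 1`, so `π a > a`. Avoiding 321 keeps every value at a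
position strictly between `a` and `π⁻¹ a` above `π a`; if `π⁻¹ a ≠ a + 1`, the positions `a`
and `π⁻¹ (π a - 1)` then violate the Fishburn condition. So `π (a + 1) = a`. Avoiding 321 and
4123 forces `π a ∈ {a + 1, a + 2}`, and avoiding 2143 (with `a, a + 1` as its `21`) makes `π`
increasing on the positions after `a + 1` other than `b = π⁻¹ (a + 1)`, which pins `π` down to
the cycle `cycFun a b`. Each pair `a < b < n` occurs exactly once, giving `C(n, 2)`
permutations besides the identity.
-/

namespace Fishburn

open Equiv Function

theorem exists_first_moved {σ : Perm ℕ} (hσ : σ ≠ 1) : ∃ a, σ a ≠ a ∧ ∀ m < a, σ m = m := by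
  have h : ∃ a, σ a ≠ a := by
    by_contra! h
    exact hσ (Perm.ext h)
  exact ⟨Nat.find h, Nat.find_spec h, fun m hm => not_not.1 (Nat.find_min h hm)⟩

theorem le_apply_of_forall_lt_fixed {σ : Perm ℕ} {a i : ℕ} (hfix : ∀ m < a, σ m = m)
    (hi : a ≤ i) : a ≤ σ i := by
  by_contra! h
  have := σ.injective (hfix _ h)
  omega

theorem apply_eq_add_of_strictMonoOn_Ico {f : ℕ → ℕ} {m N c : ℕ}
    (hf : StrictMonoOn f (Set.Ico m N)) (hm : m + c ≤ f m) (hN : ∀ i ∈ Set.Ico m N, f i < N + c)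
    {i : ℕ} (hi : i ∈ Set.Ico m N) : f i = i + c := by
  have gap : ∀ i j, m ≤ i → i ≤ j → j < N → f i + (j - i) ≤ f j := by
    intro i j hmi hij hjN
    induction j, hij using Nat.le_induction with
    | base => simp
    | succ j hij ih =>
      have := hf ⟨by omega, by omega⟩ ⟨by omega, hjN⟩ (Nat.lt_succ_self j)
      have := ih (by omega)
      omega
  obtain ⟨hmi, hiN⟩ := hi
  have := gap m i le_rfl hmi hiN
  have := gap i (N - 1) hmi (by omega) (by omega)
  have := hN (N - 1) ⟨by omega, by omega⟩
  omega

variable {n : ℕ}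

-- `π` acting on `ℕ` (fixing every `i ≥ n`), so that positions and values can be handled by `omega`.
def liftNat (π : Perm (Fin n)) : Perm ℕ := π.extendDomain Fin.equivSubtype

section LiftNat

variable (π : Perm (Fin n)) {i : ℕ}

theorem liftNat_apply_coe (x : Fin n) : liftNat π x = π x :=
  Perm.extendDomain_apply_image π Fin.equivSubtype x

@[simp]
theorem val_apply_mk (h : i < n) : (π ⟨i, h⟩ : ℕ) = liftNat π i :=
  (liftNat_apply_coe π ⟨i, h⟩).symm

theorem liftNat_apply_of_le (h : n ≤ i) : liftNat π i = i :=
  Perm.extendDomain_apply_not_subtype π Fin.equivSubtype (not_lt.2 h)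

theorem liftNat_lt (h : i < n) : liftNat π i < n := by
  rw [← val_apply_mk π h]
  exact Fin.is_lt _

theorem exists_liftNat_eq (h : i < n) : ∃ j < n, liftNat π j = i :=
  ⟨_, liftNat_lt π.symm h, (liftNat π).apply_symm_apply i⟩

theorem liftNat_injective : Injective (liftNat (n := n)) :=
  Perm.extendDomainHom_injective Fin.equivSubtype

@[simp]
theorem liftNat_one : liftNat (1 : Perm (Fin n)) = 1 :=
  Perm.extendDomain_one Fin.equivSubtype

end LiftNat

variable {π : Perm (Fin n)}

theorem contains_iff_exists_nat {k : ℕ} {p : Fin k → ℕ} (hp : Injective p) :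
    Contains π p ↔ ∃ x : Fin k → ℕ, StrictMono x ∧ (∀ i, x i < n) ∧
      ∀ i j, p i < p j → liftNat π (x i) < liftNat π (x j) := by
  constructor
  · rintro ⟨f, hf, hfp⟩
    refine ⟨fun i => f i, fun i j hij => hf hij, fun i => (f i).2, fun i j hij => ?_⟩
    simpa only [liftNat_apply_coe, Fin.lt_def] using (hfp i j).1 hij
  · rintro ⟨x, hx, hxn, hxp⟩
    refine ⟨fun i => ⟨x i, hxn i⟩, fun i j hij => hx hij, fun i j => ⟨fun h => ?_, fun h => ?_⟩⟩
    · simpa [Fin.lt_def] using hxp i j h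
    · rcases lt_trichotomy (p i) (p j) with hlt | heq | hgt
      · exact hlt
      · obtain rfl := hp heq
        exact absurd h (lt_irrefl _)
      · simp only [Fin.lt_def, val_apply_mk] at h
        exact absurd (hxp j i hgt) (lt_asymm h)

theorem contains_321_iff : Contains π ![3, 2, 1] ↔ ∃ i j k, i < j ∧ j < k ∧ k < n ∧
    liftNat π k < liftNat π j ∧ liftNat π j < liftNat π i := by
  rw [contains_iff_exists_nat (by decide)]
  constructor
  · rintro ⟨x, hx, hxn, hxp⟩
    exact ⟨x 0, x 1, x 2, hx (by decide), hx (by decide), hxn 2, hxp 2 1 (by decide),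
      hxp 1 0 (by decide)⟩
  · rintro ⟨i, j, k, hij, hjk, hk, h1, h2⟩
    refine ⟨![i, j, k], by simp [hij, hjk], fun x => ?_, fun x y => ?_⟩ <;>
      fin_cases x <;> try fin_cases y
    all_goals simp <;> omega

theorem contains_2143_iff : Contains π ![2, 1, 4, 3] ↔ ∃ i j k l, i < j ∧ j < k ∧ k < l ∧ l < n ∧
    liftNat π j < liftNat π i ∧ liftNat π i < liftNat π l ∧ liftNat π l < liftNat π k := by
  rw [contains_iff_exists_nat (by decide)]
  constructor
  · rintro ⟨x, hx, hxn, hxp⟩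
    exact ⟨x 0, x 1, x 2, x 3, hx (by decide), hx (by decide), hx (by decide), hxn 3,
      hxp 1 0 (by decide), hxp 0 3 (by decide), hxp 3 2 (by decide)⟩
  · rintro ⟨i, j, k, l, hij, hjk, hkl, hl, h1, h2, h3⟩
    refine ⟨![i, j, k, l], by simp [hij, hjk, hkl], fun x => ?_, fun x y => ?_⟩ <;>
      fin_cases x <;> try fin_cases y
    all_goals simp <;> omega

theorem contains_4123_iff : Contains π ![4, 1, 2, 3] ↔ ∃ i j k l, i < j ∧ j < k ∧ k < l ∧ l < n ∧
    liftNat π j < liftNat π k ∧ liftNat π k < liftNat π l ∧ liftNat π l < liftNat π i := by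
  rw [contains_iff_exists_nat (by decide)]
  constructor
  · rintro ⟨x, hx, hxn, hxp⟩
    exact ⟨x 0, x 1, x 2, x 3, hx (by decide), hx (by decide), hx (by decide), hxn 3,
      hxp 1 2 (by decide), hxp 2 3 (by decide), hxp 3 0 (by decide)⟩
  · rintro ⟨i, j, k, l, hij, hjk, hkl, hl, h1, h2, h3⟩
    refine ⟨![i, j, k, l], by simp [hij, hjk, hkl], fun x => ?_, fun x y => ?_⟩ <;>
      fin_cases x <;> try fin_cases y
    all_goals simp <;> omega

theorem isFishburn_iff : IsFishburn π ↔ ¬ ∃ i j, i + 1 < j ∧ j < n ∧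
    liftNat π i < liftNat π (i + 1) ∧ liftNat π i = liftNat π j + 1 := by
  simp only [IsFishburn, Fin.lt_def, val_apply_mk]
  constructor
  · rintro h ⟨i, j, hij, hj, h1, h2⟩
    exact h ⟨i, j, hij, hj, h1, by omega, h2⟩
  · rintro h ⟨i, j, hij, hj, h1, -, h2⟩
    exact h ⟨i, j, hij, hj, h1, h2⟩

theorem avoids_one {k : ℕ} {p : Fin k → ℕ} {i j : Fin k} (hij : i < j) (hp : p j < p i) :
    Avoids (1 : Perm (Fin n)) p := by
  rintro ⟨f, hf, hfp⟩
  exact lt_asymm (hf hij) ((hfp j i).1 hp)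

theorem isFishburn_one : IsFishburn (1 : Perm (Fin n)) := by
  rw [isFishburn_iff, liftNat_one]
  rintro ⟨i, j, hij, -, -, h⟩
  simp only [Perm.coe_one, id_eq] at h
  omega

/-- In one-line notation `cycFun a b` reads `a + 2, a, a + 3, a + 4, …, b, a + 1` on positions
`a, …, b` (just `a + 1, a` when `b = a + 1`) and is the identity elsewhere. -/
def cycFun (a b i : ℕ) : ℕ :=
  if i = a then min (a + 2) b
  else if i = a + 1 then a
  else if a + 2 ≤ i ∧ i < b then i + 1
  else if i = b then a + 1
  else i

theorem cycFun_cases {a b : ℕ} (hab : a < b) (i : ℕ) :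
    i = a ∧ cycFun a b i = min (a + 2) b ∨ i = a + 1 ∧ cycFun a b i = a ∨
      a + 2 ≤ i ∧ i < b ∧ cycFun a b i = i + 1 ∨ a + 2 ≤ i ∧ i = b ∧ cycFun a b i = a + 1 ∨
      (i < a ∨ b < i) ∧ cycFun a b i = i := by
  unfold cycFun
  split_ifs <;> omega

theorem cycFun_injective {a b : ℕ} (hab : a < b) : Injective (cycFun a b) := by
  intro i j h
  have hi := cycFun_cases hab i
  have hj := cycFun_cases hab j
  omega

theorem cycFun_lt {a b : ℕ} (hab : a < b) {i : ℕ} (hb : b < n) (hi : i < n) :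
    cycFun a b i < n := by
  have := cycFun_cases hab i
  omega

noncomputable def cyc (b : Fin n) (a : Fin b) : Perm (Fin n) :=
  Equiv.ofBijective (fun i => ⟨cycFun a b i, cycFun_lt a.2 b.2 i.2⟩)
    (Finite.injective_iff_bijective.1 fun _ _ h =>
      Fin.ext (cycFun_injective a.2 (Fin.val_eq_of_eq h)))

theorem liftNat_cyc (b : Fin n) (a : Fin b) (i : ℕ) : liftNat (cyc b a) i = cycFun a b i := by
  rcases lt_or_ge i n with hi | hi
  · rw [← val_apply_mk _ hi]
    rfl
  · have := cycFun_cases a.2 i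
    rw [liftNat_apply_of_le _ hi]
    omega

theorem cyc_ne_one (b : Fin n) (a : Fin b) : cyc b a ≠ 1 := by
  intro h
  have hfix : cycFun a b (a + 1) = a + 1 := by
    simpa [liftNat_cyc] using congrArg (fun σ => liftNat σ (a + 1)) h
  have := cycFun_cases a.2 (a + 1)
  omega

theorem cyc_injective : Injective fun x : Σ b : Fin n, Fin b => cyc x.1 x.2 := by
  rintro ⟨b, a⟩ ⟨b', a'⟩ h
  have key := fun i => congrArg (fun σ => liftNat σ i) h
  simp only [liftNat_cyc] at key
  -- `a` is the least and `b` the largest point moved by `cycFun a b`.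
  have := key a; have := key a'; have := key b; have := key b'
  have := cycFun_cases a.2 a; have := cycFun_cases a.2 a'
  have := cycFun_cases a.2 b; have := cycFun_cases a.2 b'
  have := cycFun_cases a'.2 a; have := cycFun_cases a'.2 a'
  have := cycFun_cases a'.2 b; have := cycFun_cases a'.2 b'
  obtain rfl : b = b' := Fin.ext (by omega)
  obtain rfl : a = a' := Fin.ext (by omega)
  rfl

theorem isFishburn_cyc (b : Fin n) (a : Fin b) : IsFishburn (cyc b a) := by
  rw [isFishburn_iff]
  rintro ⟨i, j, hij, -, h1, h2⟩
  simp only [liftNat_cyc] at h1 h2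
  have := cycFun_cases a.2 i; have := cycFun_cases a.2 (i + 1); have := cycFun_cases a.2 j
  omega

theorem avoids_321_cyc (b : Fin n) (a : Fin b) : Avoids (cyc b a) ![3, 2, 1] := by
  rw [Avoids, contains_321_iff]
  rintro ⟨i, j, k, hij, hjk, -, h1, h2⟩
  simp only [liftNat_cyc] at h1 h2
  have := cycFun_cases a.2 i; have := cycFun_cases a.2 j; have := cycFun_cases a.2 k
  omega

theorem avoids_2143_cyc (b : Fin n) (a : Fin b) : Avoids (cyc b a) ![2, 1, 4, 3] := by
  rw [Avoids, contains_2143_iff]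
  rintro ⟨i, j, k, l, hij, hjk, hkl, -, h1, h2, h3⟩
  simp only [liftNat_cyc] at h1 h2 h3
  have := cycFun_cases a.2 i; have := cycFun_cases a.2 j
  have := cycFun_cases a.2 k; have := cycFun_cases a.2 l
  omega

theorem avoids_4123_cyc (b : Fin n) (a : Fin b) : Avoids (cyc b a) ![4, 1, 2, 3] := by
  rw [Avoids, contains_4123_iff]
  rintro ⟨i, j, k, l, hij, hjk, hkl, -, h1, h2, h3⟩
  simp only [liftNat_cyc] at h1 h2 h3
  have := cycFun_cases a.2 i; have := cycFun_cases a.2 j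
  have := cycFun_cases a.2 k; have := cycFun_cases a.2 l
  omega

variable {a : ℕ}

theorem liftNat_succ_eq_of_first_moved (hF : IsFishburn π) (h321 : Avoids π ![3, 2, 1])
    (hfix : ∀ m < a, liftNat π m = m) (ha : liftNat π a ≠ a) (han : a < n) :
    liftNat π (a + 1) = a := by
  obtain ⟨p, hpn, hp⟩ := exists_liftNat_eq π han
  have hap : a < p := by
    rcases lt_trichotomy p a with h | rfl | h
    · have := hfix p h
      omega
    · exact absurd hp ha
    · exact h
  by_contra hne
  have hp2 : a + 2 ≤ p := by
    have : p ≠ a + 1 := fun h => hne (h ▸ hp)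
    omega
  have above : ∀ q, a < q → q < p → liftNat π a < liftNat π q := by
    intro q haq hqp
    by_contra! hle
    have h1 : liftNat π q ≠ liftNat π a := (liftNat π).injective.ne (by omega)
    have h2 : liftNat π q ≠ liftNat π p := (liftNat π).injective.ne (by omega)
    have h3 := le_apply_of_forall_lt_fixed hfix haq.le
    exact h321 (contains_321_iff.2 ⟨a, q, p, haq, hqp, hpn, by omega, by omega⟩)
  have ha_lt : a < liftNat π a :=
    lt_of_le_of_ne (le_apply_of_forall_lt_fixed hfix le_rfl) (Ne.symm ha)
  obtain ⟨r, hrn, hr⟩ := exists_liftNat_eq π (by have := liftNat_lt π han; omega :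
    liftNat π a - 1 < n)
  have hpr : p ≤ r := by
    by_contra! hrp
    rcases lt_trichotomy r a with h | rfl | h
    · have := hfix r h
      omega
    · omega
    · have := above r h hrp
      omega
  exact isFishburn_iff.1 hF ⟨a, r, by omega, hrn, above (a + 1) (by omega) (by omega), by omega⟩

theorem liftNat_le_add_two_of_first_moved (h321 : Avoids π ![3, 2, 1])
    (h4123 : Avoids π ![4, 1, 2, 3]) (hfix : ∀ m < a, liftNat π m = m) (han : a < n)
    (hsucc : liftNat π (a + 1) = a) : liftNat π a ≤ a + 2 := by
  by_contra! hbig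
  have hpre : ∀ v, a + 1 ≤ v → v ≤ a + 2 → ∃ r, a + 2 ≤ r ∧ r < n ∧ liftNat π r = v := by
    intro v hv1 hv2
    obtain ⟨r, hrn, hr⟩ := exists_liftNat_eq π (by have := liftNat_lt π han; omega : v < n)
    refine ⟨r, ?_, hrn, hr⟩
    by_contra! h
    rcases (show r < a ∨ r = a ∨ r = a + 1 by omega) with h | rfl | rfl
    · have := hfix r h
      omega
    all_goals omega
  obtain ⟨r₁, h₁, h₁n, hr₁⟩ := hpre (a + 1) le_rfl (by omega)
  obtain ⟨r₂, h₂, h₂n, hr₂⟩ := hpre (a + 2) (by omega) le_rfl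
  rcases lt_or_gt_of_ne (show r₁ ≠ r₂ by rintro rfl; omega) with h | h
  · exact h4123 (contains_4123_iff.2 ⟨a, a + 1, r₁, r₂, by omega, by omega, h, h₂n, by omega,
      by omega, by omega⟩)
  · exact h321 (contains_321_iff.2 ⟨a, r₂, r₁, by omega, h, h₁n, by omega, by omega⟩)

theorem strictMonoOn_of_avoids_2143 (h2143 : Avoids π ![2, 1, 4, 3])
    (hsucc : liftNat π (a + 1) = a) (ha : a < liftNat π a) :
    StrictMonoOn (liftNat π) {i | a + 1 < i ∧ i < n ∧ liftNat π a < liftNat π i} := by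
  rintro q ⟨hq, -, hq'⟩ s ⟨-, hs, hs'⟩ hqs
  rcases lt_trichotomy (liftNat π q) (liftNat π s) with h | h | h
  · exact h
  · exact absurd ((liftNat π).injective h) hqs.ne
  · exact (h2143 (contains_2143_iff.2
      ⟨a, a + 1, q, s, by omega, hq, hqs, hs, by omega, hs', h⟩)).elim

theorem liftNat_eq_cycFun_of_eq_succ (h2143 : Avoids π ![2, 1, 4, 3])
    (hfix : ∀ m < a, liftNat π m = m) (hsucc : liftNat π (a + 1) = a)
    (hval : liftNat π a = a + 1) (i : ℕ) : liftNat π i = cycFun a (a + 1) i := by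
  have hmono := strictMonoOn_of_avoids_2143 h2143 hsucc (by omega)
  have hbig : ∀ i, a + 2 ≤ i → a + 2 ≤ liftNat π i := by
    intro i hi
    have := le_apply_of_forall_lt_fixed hfix (show a ≤ i by omega)
    have h1 : liftNat π i ≠ liftNat π a := (liftNat π).injective.ne (by omega)
    have h2 : liftNat π i ≠ liftNat π (a + 1) := (liftNat π).injective.ne (by omega)
    omega
  have htail : ∀ i, a + 2 ≤ i → liftNat π i = i := by
    intro i hi
    rcases lt_or_ge i n with hin | hin
    · exact apply_eq_add_of_strictMonoOn_Ico (c := 0)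
        (hmono.mono fun j ⟨hj, hjn⟩ => ⟨by omega, hjn, by have := hbig j hj; omega⟩)
        (hbig _ le_rfl) (fun j hj => liftNat_lt π hj.2) ⟨hi, hin⟩
    · exact liftNat_apply_of_le π hin
  have := cycFun_cases (show a < a + 1 by omega) i
  rcases (show i < a ∨ i = a ∨ i = a + 1 ∨ a + 2 ≤ i by omega) with h | rfl | rfl | h
  · have := hfix i h
    omega
  · omega
  · omega
  · have := htail i h
    omega

theorem exists_liftNat_eq_cycFun_of_eq_add_two (h2143 : Avoids π ![2, 1, 4, 3])
    (hfix : ∀ m < a, liftNat π m = m) (hsucc : liftNat π (a + 1) = a)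
    (hval : liftNat π a = a + 2) (han : a < n) :
    ∃ b, a < b ∧ b < n ∧ ∀ i, liftNat π i = cycFun a b i := by
  have hmono := strictMonoOn_of_avoids_2143 h2143 hsucc (by omega)
  obtain ⟨b, hbn, hb⟩ := exists_liftNat_eq π (by have := liftNat_lt π han; omega : a + 1 < n)
  have hab : a + 2 ≤ b := by
    rcases (show b < a ∨ b = a ∨ b = a + 1 ∨ a + 2 ≤ b by omega) with h | rfl | rfl | h
    · have := hfix b h
      omega
    · omega
    · omega
    · exact h
  have hbig : ∀ i, a + 2 ≤ i → i ≠ b → a + 3 ≤ liftNat π i := by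
    intro i hi hib
    have := le_apply_of_forall_lt_fixed hfix (show a ≤ i by omega)
    have h1 : liftNat π i ≠ liftNat π a := (liftNat π).injective.ne (by omega)
    have h2 : liftNat π i ≠ liftNat π (a + 1) := (liftNat π).injective.ne (by omega)
    have h3 : liftNat π i ≠ liftNat π b := (liftNat π).injective.ne hib
    omega
  -- `skip` enumerates the positions `≥ a + 2` other than `b`, whose values are exactly `≥ a + 3`.
  let skip : ℕ → ℕ := fun i => if i < b then i else i + 1
  have skip_mem : ∀ i ∈ Set.Ico (a + 2) (n - 1),
      skip i ∈ {j | a + 1 < j ∧ j < n ∧ liftNat π a < liftNat π j} := by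
    intro i ⟨hi, hin⟩
    have : a + 2 ≤ skip i ∧ skip i < n ∧ skip i ≠ b := by
      simp only [skip]
      split_ifs <;> omega
    exact ⟨by omega, this.2.1, by have := hbig _ this.1 this.2.2; omega⟩
  have hskip : ∀ i ∈ Set.Ico (a + 2) (n - 1), liftNat π (skip i) = i + 1 := by
    refine fun i => apply_eq_add_of_strictMonoOn_Ico (f := fun i => liftNat π (skip i))
      (fun i hi j hj hij => ?_) ?_ ?_
    · refine hmono (skip_mem i hi) (skip_mem j hj) ?_
      simp only [skip]
      split_ifs <;> omega
    · simp only [skip]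
      split_ifs <;> exact hbig _ (by omega) (by omega)
    · exact fun i hi => by have := liftNat_lt π (skip_mem i hi).2.1; omega
  refine ⟨b, by omega, hbn, fun i => ?_⟩
  have := cycFun_cases (show a < b by omega) i
  rcases (show i < a ∨ i = a ∨ i = a + 1 ∨ a + 2 ≤ i ∧ i < b ∨ i = b ∨ b < i ∧ i < n ∨ n ≤ i
    by omega) with h | rfl | rfl | h | rfl | h | h
  · have := hfix i h
    omega
  · omega
  · omega
  · have := hskip i ⟨h.1, by omega⟩
    simp only [skip, if_pos h.2] at this
    omega
  · omega
  · have := hskip (i - 1) ⟨by omega, by omega⟩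
    simp only [skip, if_neg (show ¬ i - 1 < b by omega), Nat.sub_add_cancel (by omega : 1 ≤ i)]
      at this
    omega
  · rw [liftNat_apply_of_le π h]
    omega

theorem exists_cyc_eq (hF : IsFishburn π) (h321 : Avoids π ![3, 2, 1])
    (h2143 : Avoids π ![2, 1, 4, 3]) (h4123 : Avoids π ![4, 1, 2, 3]) (hπ : π ≠ 1) :
    ∃ (b : Fin n) (a : Fin b), cyc b a = π := by
  obtain ⟨a, ha, hfix⟩ := exists_first_moved ((liftNat_injective.ne hπ).trans_eq liftNat_one)
  have han : a < n := by
    by_contra! h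
    exact ha (liftNat_apply_of_le π h)
  have hsucc := liftNat_succ_eq_of_first_moved hF h321 hfix ha han
  have hle := liftNat_le_add_two_of_first_moved h321 h4123 hfix han hsucc
  have hgt := lt_of_le_of_ne (le_apply_of_forall_lt_fixed hfix le_rfl) (Ne.symm ha)
  obtain ⟨b, hab, hbn, hπb⟩ : ∃ b, a < b ∧ b < n ∧ ∀ i, liftNat π i = cycFun a b i := by
    rcases (show liftNat π a = a + 1 ∨ liftNat π a = a + 2 by omega) with hval | hval
    · exact ⟨a + 1, by omega, by have := liftNat_lt π han; omega,
        liftNat_eq_cycFun_of_eq_succ h2143 hfix hsucc hval⟩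
    · exact exists_liftNat_eq_cycFun_of_eq_add_two h2143 hfix hsucc hval han
  exact ⟨⟨b, hbn⟩, ⟨a, hab⟩, liftNat_injective (Perm.ext fun i => by rw [liftNat_cyc, hπb])⟩

theorem isFishburn_and_avoids_iff :
    (IsFishburn π ∧ Avoids π ![3, 2, 1] ∧ Avoids π ![2, 1, 4, 3] ∧ Avoids π ![4, 1, 2, 3]) ↔
      π = 1 ∨ ∃ (b : Fin n) (a : Fin b), cyc b a = π := by
  constructor
  · rintro ⟨hF, h321, h2143, h4123⟩
    by_cases hπ : π = 1
    · exact Or.inl hπ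
    · exact Or.inr (exists_cyc_eq hF h321 h2143 h4123 hπ)
  · rintro (rfl | ⟨b, a, rfl⟩)
    · exact ⟨isFishburn_one, avoids_one (i := 0) (j := 1) (by decide) (by decide),
        avoids_one (i := 0) (j := 1) (by decide) (by decide),
        avoids_one (i := 0) (j := 1) (by decide) (by decide)⟩
    · exact ⟨isFishburn_cyc b a, avoids_321_cyc b a, avoids_2143_cyc b a, avoids_4123_cyc b a⟩

theorem card_sigma_fin (n : ℕ) : Fintype.card (Σ b : Fin n, Fin b) = n.choose 2 := by
  rw [Fintype.card_sigma]
  simp only [Fintype.card_fin]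
  rw [Fin.sum_univ_eq_sum_range (fun b => b), Finset.sum_range_id, Nat.choose_two_right]

end Fishburn

open Fishburn Finset in
theorem fishburn_321_2143_4123 (n : ℕ) :
    {π : Equiv.Perm (Fin n) | IsFishburn π ∧ Avoids π ![3, 2, 1] ∧ Avoids π ![2, 1, 4, 3] ∧ Avoids π ![4, 1, 2, 3]}.ncard = n.choose 2 + 1 := by
  have hset : {π : Equiv.Perm (Fin n) | IsFishburn π ∧ Avoids π ![3, 2, 1] ∧
      Avoids π ![2, 1, 4, 3] ∧ Avoids π ![4, 1, 2, 3]} =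
      ↑(insert 1 (univ.image fun x : Σ b : Fin n, Fin b => cyc x.1 x.2)) := by
    ext π
    simp [isFishburn_and_avoids_iff]
  have hone : 1 ∉ univ.image fun x : Σ b : Fin n, Fin b => cyc x.1 x.2 := by
    simpa using fun b a => cyc_ne_one b a
  rw [hset, Set.ncard_coe_finset, card_insert_of_notMem hone,
    card_image_of_injective _ cyc_injective, card_univ, card_sigma_fin]
end

section
/- For n ≥ 4, the number of Fishburn permutations of length n avoiding the classical patterns 321, 1423, and 3124 equals F_n + 2, where F_n is the n-th Fibonacci number with F_0 = F_1 = 1. -/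
open Equiv Finset

def AdjPerm {n : ℕ} (π : Equiv.Perm (Fin n)) : Prop :=
  ∀ i : Fin n, (π i : ℕ) ≤ (i : ℕ) + 1 ∧ (i : ℕ) ≤ (π i : ℕ) + 1

instance {n : ℕ} : DecidablePred (AdjPerm (n := n)) := fun _ => by
  unfold AdjPerm; infer_instance

def adjCount (n : ℕ) : ℕ := (Finset.univ.filter (fun π : Equiv.Perm (Fin n) => AdjPerm π)).card

lemma card_filter_val_lt {n v : ℕ} (h : v ≤ n) :
    (Finset.univ.filter (fun k : Fin n => (k : ℕ) < v)).card = v := by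
  have : (Finset.univ.filter (fun k : Fin n => (k : ℕ) < v)) =
      Finset.univ.map (Fin.castLEEmb h) := by
    ext k
    simp only [mem_filter, mem_univ, true_and, mem_map]
    constructor
    · intro hk
      refine ⟨⟨(k : ℕ), hk⟩, ?_⟩
      ext
      simp [Fin.castLEEmb, Fin.castLE]
    · rintro ⟨a, rfl⟩
      simpa [Fin.castLEEmb, Fin.castLE] using a.isLt
  rw [this, Finset.card_map, Finset.card_univ, Fintype.card_fin]

lemma adjPerm_symm_zero_iff {m : ℕ} (e : Perm (Fin m)) :
    AdjPerm (Equiv.Perm.decomposeFin.symm (0, e)) ↔ AdjPerm e := by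
  constructor
  · intro h i
    have := h i.succ
    rw [Equiv.Perm.decomposeFin_symm_apply_succ] at this
    simp only [Equiv.swap_self, Equiv.refl_apply, Fin.val_succ] at this
    omega
  · intro h i
    refine Fin.cases ?_ ?_ i
    · simp [Equiv.Perm.decomposeFin_symm_apply_zero]
    · intro x
      rw [Equiv.Perm.decomposeFin_symm_apply_succ]
      simp only [Equiv.swap_self, Equiv.refl_apply, Fin.val_succ]
      have := h x
      omega

lemma L1 (m : ℕ) :
    (Finset.univ.filter (fun π : Perm (Fin (m+1)) => AdjPerm π ∧ π 0 = 0)).card = adjCount m := by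
  rw [adjCount]
  apply Finset.card_bij' (fun π _ => (Equiv.Perm.decomposeFin π).2)
    (fun e _ => Equiv.Perm.decomposeFin.symm (0, e))
  · intro π hπ
    simp only [mem_filter, mem_univ, true_and] at hπ ⊢
    obtain ⟨hA, h0⟩ := hπ
    have hfst : (Equiv.Perm.decomposeFin π).1 = π 0 := by
      conv_rhs => rw [← Equiv.Perm.decomposeFin.symm_apply_apply π]
      rw [show Equiv.Perm.decomposeFin π =
        ((Equiv.Perm.decomposeFin π).1, (Equiv.Perm.decomposeFin π).2) from rfl,
        Equiv.Perm.decomposeFin_symm_apply_zero]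
    have hπeq : Equiv.Perm.decomposeFin.symm (0, (Equiv.Perm.decomposeFin π).2) = π := by
      rw [← h0, ← hfst]
      exact Equiv.Perm.decomposeFin.symm_apply_apply π
    rw [← adjPerm_symm_zero_iff]
    rwa [hπeq]
  · intro e he
    simp only [mem_filter, mem_univ, true_and] at he ⊢
    exact ⟨(adjPerm_symm_zero_iff e).2 he, Equiv.Perm.decomposeFin_symm_apply_zero 0 e⟩
  · intro π hπ
    simp only [mem_filter, mem_univ, true_and] at hπ
    obtain ⟨hA, h0⟩ := hπ
    have hfst : (Equiv.Perm.decomposeFin π).1 = π 0 := by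
      conv_rhs => rw [← Equiv.Perm.decomposeFin.symm_apply_apply π]
      rw [show Equiv.Perm.decomposeFin π =
        ((Equiv.Perm.decomposeFin π).1, (Equiv.Perm.decomposeFin π).2) from rfl,
        Equiv.Perm.decomposeFin_symm_apply_zero]
    rw [← h0, ← hfst]
    exact Equiv.Perm.decomposeFin.symm_apply_apply π
  · intro e he
    have : Equiv.Perm.decomposeFin (Equiv.Perm.decomposeFin.symm (0, e)) = (0, e) :=
      Equiv.Perm.decomposeFin.apply_symm_apply _
    rw [this]

lemma adj_symm_one_iff {m : ℕ} (e : Perm (Fin (m+1))) :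
    AdjPerm (Equiv.Perm.decomposeFin.symm ((1 : Fin (m+2)), e)) ↔ (AdjPerm e ∧ e 0 = 0) := by
  set π := Equiv.Perm.decomposeFin.symm ((1 : Fin (m+2)), e) with hπ
  have h0 : π 0 = 1 := Equiv.Perm.decomposeFin_symm_apply_zero 1 e
  constructor
  · intro h
    have he0 : e 0 = 0 := by
      set y := π.symm 0 with hy'
      have hy : π y = 0 := π.apply_symm_apply 0
      have hy0 : y ≠ 0 := by
        intro hh
        rw [hh, h0] at hy
        exact one_ne_zero hy
      obtain ⟨x, hyx⟩ := Fin.eq_succ_of_ne_zero hy0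
      rw [hyx] at hy
      have hx : Equiv.swap (0 : Fin (m+2)) 1 (e x).succ = 0 := by
        rw [← Equiv.Perm.decomposeFin_symm_apply_succ e 1 x]; exact hy
      have hex : e x = 0 := by
        have : (e x).succ = Equiv.swap (0 : Fin (m+2)) 1 0 := by
          have := congrArg (Equiv.swap (0 : Fin (m+2)) 1) hx
          rwa [Equiv.swap_apply_self] at this
        rw [Equiv.swap_apply_left] at this
        rw [← Fin.succ_zero_eq_one] at this
        exact Fin.succ_injective _ this
      have hxa := (h x.succ).2
      rw [hy] at hxa
      simp only [Fin.val_succ, Fin.val_zero] at hxa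
      have hx0 : x = 0 := by
        have hv : (x : ℕ) = 0 := by omega
        exact Fin.ext (by simp [hv])
      rw [hx0] at hex
      exact hex
    refine ⟨?_, he0⟩
    intro i
    by_cases hi : i = 0
    · subst hi; rw [he0]; simp
    · have hei : e i ≠ 0 := by
        intro hh; exact hi (e.injective (hh.trans he0.symm))
      have hne1 : (e i).succ ≠ 1 := by
        intro hh
        rw [← Fin.succ_zero_eq_one] at hh
        exact hei (Fin.succ_injective _ hh)
      have hcalc : π i.succ = (e i).succ := by
        rw [hπ, Equiv.Perm.decomposeFin_symm_apply_succ,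
          Equiv.swap_apply_of_ne_of_ne (Fin.succ_ne_zero _) hne1]
      have := h i.succ
      rw [hcalc] at this
      simp only [Fin.val_succ] at this
      omega
  · rintro ⟨hA, he0⟩
    intro i
    refine Fin.cases ?_ ?_ i
    · rw [h0]; simp
    · intro x
      by_cases hx : x = 0
      · subst hx
        have : π (0 : Fin (m+1)).succ = 0 := by
          rw [hπ, Equiv.Perm.decomposeFin_symm_apply_succ, he0, Fin.succ_zero_eq_one,
            Equiv.swap_apply_right]
        rw [this]
        simp
      · have hei : e x ≠ 0 := by
          intro hh; exact hx (e.injective (hh.trans he0.symm))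
        have hne1 : (e x).succ ≠ 1 := by
          intro hh
          rw [← Fin.succ_zero_eq_one] at hh
          exact hei (Fin.succ_injective _ hh)
        have hcalc : π x.succ = (e x).succ := by
          rw [hπ, Equiv.Perm.decomposeFin_symm_apply_succ,
            Equiv.swap_apply_of_ne_of_ne (Fin.succ_ne_zero _) hne1]
        rw [hcalc]
        simp only [Fin.val_succ]
        have := hA x
        omega

lemma L2 (m : ℕ) :
    (Finset.univ.filter (fun π : Perm (Fin (m+2)) => AdjPerm π ∧ π 0 = 1)).card =
    (Finset.univ.filter (fun e : Perm (Fin (m+1)) => AdjPerm e ∧ e 0 = 0)).card := by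
  apply Finset.card_bij' (fun π _ => (Equiv.Perm.decomposeFin π).2)
    (fun e _ => Equiv.Perm.decomposeFin.symm (1, e))
  · intro π hπ
    simp only [mem_filter, mem_univ, true_and] at hπ ⊢
    obtain ⟨hA, h0⟩ := hπ
    have hfst : (Equiv.Perm.decomposeFin π).1 = π 0 := by
      conv_rhs => rw [← Equiv.Perm.decomposeFin.symm_apply_apply π]
      rw [show Equiv.Perm.decomposeFin π =
        ((Equiv.Perm.decomposeFin π).1, (Equiv.Perm.decomposeFin π).2) from rfl,
        Equiv.Perm.decomposeFin_symm_apply_zero]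
    have hπeq : Equiv.Perm.decomposeFin.symm (1, (Equiv.Perm.decomposeFin π).2) = π := by
      rw [← h0, ← hfst]
      exact Equiv.Perm.decomposeFin.symm_apply_apply π
    have := (adj_symm_one_iff (Equiv.Perm.decomposeFin π).2).1 (by rwa [hπeq])
    exact this
  · intro e he
    simp only [mem_filter, mem_univ, true_and] at he ⊢
    exact ⟨(adj_symm_one_iff e).2 he, Equiv.Perm.decomposeFin_symm_apply_zero 1 e⟩
  · intro π hπ
    simp only [mem_filter, mem_univ, true_and] at hπ
    obtain ⟨hA, h0⟩ := hπ
    have hfst : (Equiv.Perm.decomposeFin π).1 = π 0 := by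
      conv_rhs => rw [← Equiv.Perm.decomposeFin.symm_apply_apply π]
      rw [show Equiv.Perm.decomposeFin π =
        ((Equiv.Perm.decomposeFin π).1, (Equiv.Perm.decomposeFin π).2) from rfl,
        Equiv.Perm.decomposeFin_symm_apply_zero]
    rw [← h0, ← hfst]
    exact Equiv.Perm.decomposeFin.symm_apply_apply π
  · intro e he
    have : Equiv.Perm.decomposeFin (Equiv.Perm.decomposeFin.symm (1, e)) = (1, e) :=
      Equiv.Perm.decomposeFin.apply_symm_apply _
    rw [this]

lemma adjCount_succ_succ (m : ℕ) : adjCount (m+2) = adjCount (m+1) + adjCount m := by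
  have hsplit : (Finset.univ.filter (fun π : Perm (Fin (m+2)) => AdjPerm π)) =
      (Finset.univ.filter (fun π : Perm (Fin (m+2)) => AdjPerm π ∧ π 0 = 0)) ∪
      (Finset.univ.filter (fun π : Perm (Fin (m+2)) => AdjPerm π ∧ π 0 = 1)) := by
    ext π
    simp only [mem_filter, mem_univ, true_and, mem_union]
    constructor
    · intro hA
      have h := (hA 0).1
      simp only [Fin.val_zero] at h
      have : π 0 = 0 ∨ π 0 = 1 := by
        have hval : (π 0 : ℕ) = 0 ∨ (π 0 : ℕ) = 1 := by omega
        rcases hval with h' | h'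
        · left; ext; simp [h']
        · right; ext; simp [h']
      tauto
    · rintro (⟨hA, -⟩ | ⟨hA, -⟩) <;> exact hA
  have hdisj : Disjoint
      (Finset.univ.filter (fun π : Perm (Fin (m+2)) => AdjPerm π ∧ π 0 = 0))
      (Finset.univ.filter (fun π : Perm (Fin (m+2)) => AdjPerm π ∧ π 0 = 1)) := by
    rw [Finset.disjoint_left]
    intro π h1 h2
    simp only [mem_filter] at h1 h2
    have := h1.2.2.symm.trans h2.2.2
    exact one_ne_zero this.symm
  rw [adjCount, hsplit, Finset.card_union_of_disjoint hdisj, L1, L2, L1]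

lemma adjCount_zero : adjCount 0 = 1 := by
  have hall : ∀ π ∈ (Finset.univ : Finset (Perm (Fin 0))), AdjPerm π := by
    intro π _ i
    exact i.elim0
  rw [adjCount, Finset.filter_true_of_mem hall, Finset.card_univ, Fintype.card_perm]
  simp

lemma adjCount_one : adjCount 1 = 1 := by
  have hall : ∀ π ∈ (Finset.univ : Finset (Perm (Fin 1))), AdjPerm π := by
    intro π _ i
    have h1 : (π i : ℕ) < 1 := (π i).isLt
    have h2 : (i : ℕ) < 1 := i.isLt
    omega
  rw [adjCount, Finset.filter_true_of_mem hall, Finset.card_univ, Fintype.card_perm]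
  simp

lemma adjCount_eq_fib : ∀ n, adjCount n = Nat.fib (n + 1)
  | 0 => by rw [adjCount_zero]; rfl
  | 1 => by rw [adjCount_one]; rfl
  | (n+2) => by
      rw [adjCount_succ_succ, adjCount_eq_fib (n+1), adjCount_eq_fib n]
      have h : Nat.fib (n+2+1) = Nat.fib (n+1) + Nat.fib (n+1+1) := Nat.fib_add_two
      omega

lemma not321 {n : ℕ} {π : Perm (Fin n)} (h : Avoids π ![3, 2, 1]) {a b c : Fin n}
    (hab : a < b) (hbc : b < c) (h1 : π b < π a) (h2 : π c < π b) : False := by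
  have h3 : π c < π a := h2.trans h1
  apply h
  refine ⟨![a, b, c], ?_, ?_⟩
  · rw [Fin.strictMono_iff_lt_succ]
    intro i
    fin_cases i
    · exact hab
    · exact hbc
  · intro i j
    fin_cases i <;> fin_cases j
    · exact iff_of_false (by decide) (lt_irrefl _)
    · exact iff_of_false (by decide) (asymm h1)
    · exact iff_of_false (by decide) (asymm h3)
    · exact iff_of_true (by decide) h1
    · exact iff_of_false (by decide) (lt_irrefl _)
    · exact iff_of_false (by decide) (asymm h2)
    · exact iff_of_true (by decide) h3
    · exact iff_of_true (by decide) h2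
    · exact iff_of_false (by decide) (lt_irrefl _)

lemma not1423 {n : ℕ} {π : Perm (Fin n)} (h : Avoids π ![1, 4, 2, 3]) {a b c d : Fin n}
    (hab : a < b) (hbc : b < c) (hcd : c < d)
    (h1 : π a < π c) (h2 : π c < π d) (h3 : π d < π b) : False := by
  have h4 : π a < π d := h1.trans h2
  have h5 : π a < π b := h4.trans h3
  have h6 : π c < π b := h2.trans h3
  apply h
  refine ⟨![a, b, c, d], ?_, ?_⟩
  · rw [Fin.strictMono_iff_lt_succ]
    intro i
    fin_cases i
    · exact hab
    · exact hbc
    · exact hcd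
  · intro i j
    fin_cases i <;> fin_cases j
    · exact iff_of_false (by decide) (lt_irrefl _)
    · exact iff_of_true (by decide) h5
    · exact iff_of_true (by decide) h1
    · exact iff_of_true (by decide) h4
    · exact iff_of_false (by decide) (asymm h5)
    · exact iff_of_false (by decide) (lt_irrefl _)
    · exact iff_of_false (by decide) (asymm h6)
    · exact iff_of_false (by decide) (asymm h3)
    · exact iff_of_false (by decide) (asymm h1)
    · exact iff_of_true (by decide) h6
    · exact iff_of_false (by decide) (lt_irrefl _)
    · exact iff_of_true (by decide) h2
    · exact iff_of_false (by decide) (asymm h4)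
    · exact iff_of_true (by decide) h3
    · exact iff_of_false (by decide) (asymm h2)
    · exact iff_of_false (by decide) (lt_irrefl _)

lemma not3124 {n : ℕ} {π : Perm (Fin n)} (h : Avoids π ![3, 1, 2, 4]) {a b c d : Fin n}
    (hab : a < b) (hbc : b < c) (hcd : c < d)
    (h1 : π b < π c) (h2 : π c < π a) (h3 : π a < π d) : False := by
  have h4 : π b < π a := h1.trans h2
  have h5 : π b < π d := h4.trans h3
  have h6 : π c < π d := h2.trans h3
  apply h
  refine ⟨![a, b, c, d], ?_, ?_⟩
  · rw [Fin.strictMono_iff_lt_succ]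
    intro i
    fin_cases i
    · exact hab
    · exact hbc
    · exact hcd
  · intro i j
    fin_cases i <;> fin_cases j
    · exact iff_of_false (by decide) (lt_irrefl _)
    · exact iff_of_false (by decide) (asymm h4)
    · exact iff_of_false (by decide) (asymm h2)
    · exact iff_of_true (by decide) h3
    · exact iff_of_true (by decide) h4
    · exact iff_of_false (by decide) (lt_irrefl _)
    · exact iff_of_true (by decide) h1
    · exact iff_of_true (by decide) h5
    · exact iff_of_true (by decide) h2
    · exact iff_of_false (by decide) (asymm h1)
    · exact iff_of_false (by decide) (lt_irrefl _)
    · exact iff_of_true (by decide) h6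
    · exact iff_of_false (by decide) (asymm h3)
    · exact iff_of_false (by decide) (asymm h5)
    · exact iff_of_false (by decide) (asymm h6)
    · exact iff_of_false (by decide) (lt_irrefl _)

lemma notFishburn {n : ℕ} {π : Perm (Fin n)} (h : IsFishburn π) (i j : ℕ)
    (hij : i + 1 < j) (hj : j < n)
    (h1 : π ⟨i, by omega⟩ < π ⟨i + 1, by omega⟩)
    (h2 : π ⟨j, hj⟩ < π ⟨i, by omega⟩)
    (h3 : (π ⟨i, by omega⟩ : ℕ) = (π ⟨j, hj⟩ : ℕ) + 1) : False :=
  h ⟨i, j, hij, hj, h1, h2, h3⟩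
section SigDefs
open Equiv
variable {n : ℕ}

def sig1 (n : ℕ) (hn : 4 ≤ n) : Perm (Fin n) where
  toFun k := ⟨if (k : ℕ) = 0 then n - 1 else (k : ℕ) - 1, by
    have := k.isLt; split <;> omega⟩
  invFun k := ⟨if (k : ℕ) = n - 1 then 0 else (k : ℕ) + 1, by
    have := k.isLt; split <;> omega⟩
  left_inv k := by
    have hk := k.isLt
    apply Fin.ext
    show (if (if (k : ℕ) = 0 then n - 1 else (k : ℕ) - 1) = n - 1 then 0
      else (if (k : ℕ) = 0 then n - 1 else (k : ℕ) - 1) + 1) = (k : ℕ)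
    split_ifs <;> first | exact ‹False›.elim | omega
  right_inv k := by
    have hk := k.isLt
    apply Fin.ext
    show (if (if (k : ℕ) = n - 1 then 0 else (k : ℕ) + 1) = 0 then n - 1
      else (if (k : ℕ) = n - 1 then 0 else (k : ℕ) + 1) - 1) = (k : ℕ)
    split_ifs <;> first | exact ‹False›.elim | omega

def sig2 (n : ℕ) (hn : 4 ≤ n) : Perm (Fin n) where
  toFun k := ⟨if (k : ℕ) = 0 then 2 else if (k : ℕ) = 1 then 0 else
      if (k : ℕ) = n - 1 then 1 else (k : ℕ) + 1, by
    have := k.isLt; split_ifs <;> omega⟩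
  invFun k := ⟨if (k : ℕ) = 2 then 0 else if (k : ℕ) = 0 then 1 else
      if (k : ℕ) = 1 then n - 1 else (k : ℕ) - 1, by
    have := k.isLt; split_ifs <;> omega⟩
  left_inv k := by
    have hk := k.isLt
    apply Fin.ext
    show (if (if (k : ℕ) = 0 then 2 else if (k : ℕ) = 1 then 0 else
      if (k : ℕ) = n - 1 then 1 else (k : ℕ) + 1) = 2 then 0 else
      if (if (k : ℕ) = 0 then 2 else if (k : ℕ) = 1 then 0 else
      if (k : ℕ) = n - 1 then 1 else (k : ℕ) + 1) = 0 then 1 else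
      if (if (k : ℕ) = 0 then 2 else if (k : ℕ) = 1 then 0 else
      if (k : ℕ) = n - 1 then 1 else (k : ℕ) + 1) = 1 then n - 1 else
      (if (k : ℕ) = 0 then 2 else if (k : ℕ) = 1 then 0 else
      if (k : ℕ) = n - 1 then 1 else (k : ℕ) + 1) - 1) = (k : ℕ)
    split_ifs <;> first | exact ‹False›.elim | omega
  right_inv k := by
    have hk := k.isLt
    apply Fin.ext
    show (if (if (k : ℕ) = 2 then 0 else if (k : ℕ) = 0 then 1 else
      if (k : ℕ) = 1 then n - 1 else (k : ℕ) - 1) = 0 then 2 else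
      if (if (k : ℕ) = 2 then 0 else if (k : ℕ) = 0 then 1 else
      if (k : ℕ) = 1 then n - 1 else (k : ℕ) - 1) = 1 then 0 else
      if (if (k : ℕ) = 2 then 0 else if (k : ℕ) = 0 then 1 else
      if (k : ℕ) = 1 then n - 1 else (k : ℕ) - 1) = n - 1 then 1 else
      (if (k : ℕ) = 2 then 0 else if (k : ℕ) = 0 then 1 else
      if (k : ℕ) = 1 then n - 1 else (k : ℕ) - 1) + 1) = (k : ℕ)
    split_ifs <;> first | exact ‹False›.elim | omega

lemma sig1_val (hn : 4 ≤ n) (k : Fin n) :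
    ((sig1 n hn) k : ℕ) = if (k : ℕ) = 0 then n - 1 else (k : ℕ) - 1 := by rfl

lemma sig2_val (hn : 4 ≤ n) (k : Fin n) :
    ((sig2 n hn) k : ℕ) = if (k : ℕ) = 0 then 2 else if (k : ℕ) = 1 then 0 else
      if (k : ℕ) = n - 1 then 1 else (k : ℕ) + 1 := by rfl

end SigDefs
section Memb
open Equiv
variable {n : ℕ}

lemma sig1_cases (hn : 4 ≤ n) (k : Fin n) :
    ((k : ℕ) = 0 ∧ ((sig1 n hn) k : ℕ) = n - 1) ∨
    (1 ≤ (k : ℕ) ∧ (k : ℕ) ≤ n - 1 ∧ ((sig1 n hn) k : ℕ) = (k : ℕ) - 1) := by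
  have hk := k.isLt
  rw [sig1_val]
  split_ifs <;> omega

lemma sig2_cases (hn : 4 ≤ n) (k : Fin n) :
    ((k : ℕ) = 0 ∧ ((sig2 n hn) k : ℕ) = 2) ∨
    ((k : ℕ) = 1 ∧ ((sig2 n hn) k : ℕ) = 0) ∨
    ((k : ℕ) = n - 1 ∧ ((sig2 n hn) k : ℕ) = 1) ∨
    (2 ≤ (k : ℕ) ∧ (k : ℕ) ≤ n - 2 ∧ ((sig2 n hn) k : ℕ) = (k : ℕ) + 1) := by
  have hk := k.isLt
  rw [sig2_val]
  split_ifs <;> omega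

lemma avoids321_of {π : Perm (Fin n)}
    (H : ∀ a b c : Fin n, a < b → b < c → π b < π a → π c < π b → False) :
    Avoids π ![3, 2, 1] := by
  rintro ⟨f, hsm, hp⟩
  exact H (f 0) (f 1) (f 2) (hsm (by decide)) (hsm (by decide))
    ((hp 1 0).mp (by decide)) ((hp 2 1).mp (by decide))

lemma avoids1423_of {π : Perm (Fin n)}
    (H : ∀ a b c d : Fin n, a < b → b < c → c < d →
      π a < π c → π c < π d → π d < π b → False) :
    Avoids π ![1, 4, 2, 3] := by
  rintro ⟨f, hsm, hp⟩
  exact H (f 0) (f 1) (f 2) (f 3) (hsm (by decide)) (hsm (by decide)) (hsm (by decide))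
    ((hp 0 2).mp (by decide)) ((hp 2 3).mp (by decide)) ((hp 3 1).mp (by decide))

lemma avoids3124_of {π : Perm (Fin n)}
    (H : ∀ a b c d : Fin n, a < b → b < c → c < d →
      π b < π c → π c < π a → π a < π d → False) :
    Avoids π ![3, 1, 2, 4] := by
  rintro ⟨f, hsm, hp⟩
  exact H (f 0) (f 1) (f 2) (f 3) (hsm (by decide)) (hsm (by decide)) (hsm (by decide))
    ((hp 1 2).mp (by decide)) ((hp 2 0).mp (by decide)) ((hp 0 3).mp (by decide))

lemma adj_memb {π : Perm (Fin n)} (hA : AdjPerm π) :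
    IsFishburn π ∧ Avoids π ![3, 2, 1] ∧ Avoids π ![1, 4, 2, 3] ∧ Avoids π ![3, 1, 2, 4] := by
  refine ⟨?_, ?_, ?_, ?_⟩
  · rintro ⟨i, j, hij, hj, h1, h2, h3⟩
    have ha := hA ⟨i, by omega⟩
    have hb := hA ⟨j, hj⟩
    rw [Fin.lt_def] at h1 h2
    simp only at ha hb h1 h2 h3
    omega
  · apply avoids321_of
    intro a b c hab hbc h1 h2
    have ha := hA a
    have hc := hA c
    rw [Fin.lt_def] at hab hbc h1 h2
    omega
  · apply avoids1423_of
    intro a b c d hab hbc hcd h1 h2 h3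
    have hb := hA b
    have hc := hA c
    rw [Fin.lt_def] at hab hbc hcd h1 h2 h3
    omega
  · apply avoids3124_of
    intro a b c d hab hbc hcd h1 h2 h3
    have ha := hA a
    have hc := hA c
    rw [Fin.lt_def] at hab hbc hcd h1 h2 h3
    omega

lemma sig1_memb (hn : 4 ≤ n) :
    IsFishburn (sig1 n hn) ∧ Avoids (sig1 n hn) ![3, 2, 1] ∧
      Avoids (sig1 n hn) ![1, 4, 2, 3] ∧ Avoids (sig1 n hn) ![3, 1, 2, 4] := by
  refine ⟨?_, ?_, ?_, ?_⟩
  · rintro ⟨i, j, hij, hj, h1, h2, h3⟩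
    rw [Fin.lt_def] at h1 h2
    have c1 := sig1_cases hn ⟨i, by omega⟩
    have c2 := sig1_cases hn ⟨i + 1, by omega⟩
    have c3 := sig1_cases hn ⟨j, hj⟩
    simp only [Fin.val_mk] at c1 c2 c3
    omega
  · apply avoids321_of
    intro a b c hab hbc h1 h2
    rw [Fin.lt_def] at hab hbc h1 h2
    have ca := sig1_cases hn a
    have cb := sig1_cases hn b
    have cc := sig1_cases hn c
    omega
  · apply avoids1423_of
    intro a b c d hab hbc hcd h1 h2 h3
    rw [Fin.lt_def] at hab hbc hcd h1 h2 h3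
    have ca := sig1_cases hn a
    have cb := sig1_cases hn b
    have cc := sig1_cases hn c
    have cd := sig1_cases hn d
    omega
  · apply avoids3124_of
    intro a b c d hab hbc hcd h1 h2 h3
    rw [Fin.lt_def] at hab hbc hcd h1 h2 h3
    have ca := sig1_cases hn a
    have cb := sig1_cases hn b
    have cc := sig1_cases hn c
    have cd := sig1_cases hn d
    omega

lemma sig2_memb (hn : 4 ≤ n) :
    IsFishburn (sig2 n hn) ∧ Avoids (sig2 n hn) ![3, 2, 1] ∧
      Avoids (sig2 n hn) ![1, 4, 2, 3] ∧ Avoids (sig2 n hn) ![3, 1, 2, 4] := by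
  refine ⟨?_, ?_, ?_, ?_⟩
  · rintro ⟨i, j, hij, hj, h1, h2, h3⟩
    rw [Fin.lt_def] at h1 h2
    have c1 := sig2_cases hn ⟨i, by omega⟩
    have c2 := sig2_cases hn ⟨i + 1, by omega⟩
    have c3 := sig2_cases hn ⟨j, hj⟩
    simp only [Fin.val_mk] at c1 c2 c3
    omega
  · apply avoids321_of
    intro a b c hab hbc h1 h2
    rw [Fin.lt_def] at hab hbc h1 h2
    have ca := sig2_cases hn a
    have cb := sig2_cases hn b
    have cc := sig2_cases hn c
    omega
  · apply avoids1423_of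
    intro a b c d hab hbc hcd h1 h2 h3
    rw [Fin.lt_def] at hab hbc hcd h1 h2 h3
    have ca := sig2_cases hn a
    have cb := sig2_cases hn b
    have cc := sig2_cases hn c
    have cd := sig2_cases hn d
    omega
  · apply avoids3124_of
    intro a b c d hab hbc hcd h1 h2 h3
    rw [Fin.lt_def] at hab hbc hcd h1 h2 h3
    have ca := sig2_cases hn a
    have cb := sig2_cases hn b
    have cc := sig2_cases hn c
    have cd := sig2_cases hn d
    omega

end Memb
section Hard
open Equiv Finset
variable {n : ℕ}

lemma claim_a (hn : 4 ≤ n) (π : Perm (Fin n)) (hF : IsFishburn π)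
    (h321 : Avoids π ![3, 2, 1]) (h1423 : Avoids π ![1, 4, 2, 3])
    (hv : (π ⟨0, by omega⟩ : ℕ) ≤ 1) :
    ∀ i : Fin n, (π i : ℕ) ≤ (i : ℕ) + 1 := by
  by_contra hcon
  push_neg at hcon
  obtain ⟨a, ha⟩ := hcon
  set zero : Fin n := ⟨0, by omega⟩ with hzero
  have ha1 : 1 ≤ (a : ℕ) := by
    rcases Nat.eq_zero_or_pos (a : ℕ) with h | h
    · exfalso
      have : a = zero := Fin.ext h
      rw [this] at ha
      omega
    · exact h
  -- pigeonhole: at least two positions after a carry values below π a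
  set T : Finset (Fin n) := Finset.univ.filter
    (fun k => (a : ℕ) < (k : ℕ) ∧ (π k : ℕ) < (π a : ℕ)) with hT
  have hT2 : 2 ≤ T.card := by
    set P : Finset (Fin n) := Finset.univ.filter (fun k => (π k : ℕ) < (π a : ℕ)) with hP
    have hPimg : P.image π = Finset.univ.filter (fun v : Fin n => (v : ℕ) < (π a : ℕ)) := by
      ext v
      simp only [Finset.mem_image, Finset.mem_filter, Finset.mem_univ, true_and, hP]
      constructor
      · rintro ⟨k, hk, rfl⟩
        exact hk
      · intro hv'
        exact ⟨π.symm v, by simp [hv'], π.apply_symm_apply v⟩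
    have hPcard : P.card = (π a : ℕ) := by
      rw [← Finset.card_image_of_injective P π.injective, hPimg,
        card_filter_val_lt (le_of_lt (π a).isLt)]
    have hsub : P ⊆ (Finset.univ.filter (fun k : Fin n => (k : ℕ) < (a : ℕ))) ∪ T := by
      intro k hk
      simp only [Finset.mem_filter, Finset.mem_univ, true_and, hP] at hk
      rcases lt_trichotomy (k : ℕ) (a : ℕ) with h | h | h
      · exact Finset.mem_union_left _
          (by simp only [Finset.mem_filter, Finset.mem_univ, true_and]; exact h)
      · exfalso
        have : k = a := Fin.ext h
        rw [this] at hk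
        omega
      · exact Finset.mem_union_right _
          (by simp only [hT, Finset.mem_filter, Finset.mem_univ, true_and]; exact ⟨h, hk⟩)
    have hcard1 : (Finset.univ.filter (fun k : Fin n => (k : ℕ) < (a : ℕ))).card = (a : ℕ) :=
      card_filter_val_lt (le_of_lt a.isLt)
    have := Finset.card_le_card hsub
    have := Finset.card_union_le (Finset.univ.filter (fun k : Fin n => (k : ℕ) < (a : ℕ))) T
    omega
  have hTne : T.Nonempty := Finset.card_pos.mp (by omega)
  set q1 : Fin n := T.min' hTne with hq1def
  have hq1T : q1 ∈ T := T.min'_mem hTne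
  have hq1le : ∀ k ∈ T, q1 ≤ k := fun k hk => T.min'_le k hk
  obtain ⟨x, hx, y, hy, hxy⟩ := Finset.one_lt_card.mp (by omega : 1 < T.card)
  have hq2ex : ∃ q2 ∈ T, q2 ≠ q1 := by
    rcases eq_or_ne x q1 with rfl | h
    · exact ⟨y, hy, fun hh => hxy hh.symm⟩
    · exact ⟨x, hx, h⟩
  obtain ⟨q2, hq2T, hq2ne⟩ := hq2ex
  have hq1m : (a : ℕ) < (q1 : ℕ) ∧ (π q1 : ℕ) < (π a : ℕ) := by
    have := hq1T; simp only [hT, Finset.mem_filter, Finset.mem_univ, true_and] at this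
    exact this
  have hq2m : (a : ℕ) < (q2 : ℕ) ∧ (π q2 : ℕ) < (π a : ℕ) := by
    have := hq2T; simp only [hT, Finset.mem_filter, Finset.mem_univ, true_and] at this
    exact this
  have hq12 : (q1 : ℕ) < (q2 : ℕ) := by
    have hle := hq1le q2 hq2T
    have : (q1 : ℕ) ≤ (q2 : ℕ) := hle
    rcases this.lt_or_eq with h | h
    · exact h
    · exact absurd (Fin.ext h) hq2ne.symm
  have h12 : (π q1 : ℕ) < (π q2 : ℕ) := by
    by_contra hcc
    push_neg at hcc
    have hne : (π q2 : ℕ) ≠ (π q1 : ℕ) := fun hh => hq2ne (π.injective (Fin.ext hh))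
    exact not321 h321 (Fin.lt_def.mpr hq1m.1) (Fin.lt_def.mpr hq12)
      (Fin.lt_def.mpr hq1m.2) (Fin.lt_def.mpr (by omega))
  have hpre : ∀ e : Fin n, (e : ℕ) < (a : ℕ) → (π q1 : ℕ) < (π e : ℕ) := by
    intro e he
    by_contra hcc
    push_neg at hcc
    have hne : (π e : ℕ) ≠ (π q1 : ℕ) := by
      intro hh
      have : e = q1 := π.injective (Fin.ext hh)
      rw [this] at he
      omega
    exact not1423 h1423 (Fin.lt_def.mpr he) (Fin.lt_def.mpr hq1m.1) (Fin.lt_def.mpr hq12)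
      (Fin.lt_def.mpr (by omega)) (Fin.lt_def.mpr h12) (Fin.lt_def.mpr hq2m.2)
  have hq10 : (π q1 : ℕ) = 0 := by
    by_contra hne0
    set z : Fin n := π.symm zero with hzdef
    have hz : π z = zero := π.apply_symm_apply zero
    have hzval : (π z : ℕ) = 0 := by rw [hz]
    rcases lt_trichotomy (z : ℕ) (a : ℕ) with h | h | h
    · have := hpre z h
      omega
    · have : z = a := Fin.ext h
      rw [this] at hzval
      omega
    · have hzT : z ∈ T := by
        simp only [hT, Finset.mem_filter, Finset.mem_univ, true_and]
        exact ⟨h, by omega⟩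
      have hzq1 : z ≠ q1 := by
        intro hh
        rw [hh] at hzval
        omega
      have hq1z : (q1 : ℕ) < (z : ℕ) := by
        have := hq1le z hzT
        have h' : (q1 : ℕ) ≤ (z : ℕ) := this
        rcases h'.lt_or_eq with h'' | h''
        · exact h''
        · exact absurd (Fin.ext h'') hzq1.symm
      exact not321 h321 (Fin.lt_def.mpr hq1m.1) (Fin.lt_def.mpr hq1z)
        (Fin.lt_def.mpr hq1m.2) (Fin.lt_def.mpr (by omega))
  have hp0 : (π zero : ℕ) = 1 := by
    have := hpre zero (by simp [hzero]; omega)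
    omega
  have hp1 : 2 ≤ (π ⟨1, by omega⟩ : ℕ) := by
    have hne1 : (π ⟨1, by omega⟩ : ℕ) ≠ 1 := by
      intro hh
      have : (⟨1, by omega⟩ : Fin n) = zero := π.injective (Fin.ext (by omega))
      have := congrArg Fin.val this
      simp [hzero] at this
    have hne0 : (π ⟨1, by omega⟩ : ℕ) ≠ 0 := by
      intro hh
      have : (⟨1, by omega⟩ : Fin n) = q1 := π.injective (Fin.ext (by omega))
      have := congrArg Fin.val this
      simp at this
      omega
    omega
  refine notFishburn hF 0 (q1 : ℕ) (by omega) q1.isLt ?_ ?_ ?_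
  · show π zero < π ⟨1, by omega⟩
    rw [Fin.lt_def]
    omega
  · show π q1 < π zero
    rw [Fin.lt_def]
    omega
  · show (π zero : ℕ) = (π q1 : ℕ) + 1
    omega

set_option maxHeartbeats 800000 in
lemma claim_b (hn : 4 ≤ n) (π : Perm (Fin n)) (hF : IsFishburn π)
    (hub : ∀ i : Fin n, (π i : ℕ) ≤ (i : ℕ) + 1) :
    ∀ i : Fin n, (i : ℕ) ≤ (π i : ℕ) + 1 := by
  by_contra hcon
  push_neg at hcon
  obtain ⟨b, hb⟩ := hcon
  set w : ℕ := (π b : ℕ) with hw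
  have hwb : w + 2 ≤ (b : ℕ) := by omega
  have hbn : (b : ℕ) < n := b.isLt
  set S : Finset (Fin n) := Finset.univ.filter (fun k : Fin n => (k : ℕ) < w + 2) with hS
  set V : Finset (Fin n) :=
    (Finset.univ.filter (fun v : Fin n => (v : ℕ) < w + 3)).erase ⟨w, by omega⟩ with hV
  have himg : S.image π ⊆ V := by
    intro v hv
    obtain ⟨k, hk, rfl⟩ := Finset.mem_image.mp hv
    simp only [hS, Finset.mem_filter, Finset.mem_univ, true_and] at hk
    have h1 : (π k : ℕ) ≤ (k : ℕ) + 1 := hub k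
    simp only [hV, Finset.mem_erase, Finset.mem_filter, Finset.mem_univ, true_and]
    constructor
    · intro hh
      have hval : (π k : ℕ) = w := congrArg Fin.val hh
      have : π k = π b := Fin.ext (by omega)
      have := π.injective this
      rw [this] at hk
      omega
    · omega
  have hScard : S.card = w + 2 := card_filter_val_lt (by omega)
  have hVcard : V.card = w + 2 := by
    rw [hV, Finset.card_erase_of_mem (by
      simp only [Finset.mem_filter, Finset.mem_univ, true_and]
      omega), card_filter_val_lt (by omega : w + 3 ≤ n)]
    omega
  have himgcard : (S.image π).card = w + 2 := by
    rw [Finset.card_image_of_injective S π.injective, hScard]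
  have himg_eq : S.image π = V := Finset.eq_of_subset_of_card_le himg (by omega)
  have hmemV : ∀ (u : ℕ) (hu : u < n), u < w + 3 → u ≠ w → (⟨u, hu⟩ : Fin n) ∈ V := by
    intro u hu h1 h2
    simp only [hV, Finset.mem_erase, Finset.mem_filter, Finset.mem_univ, true_and]
    refine ⟨?_, h1⟩
    intro hh
    have := congrArg Fin.val hh
    simp only at this
    exact h2 this
  have hmem1 : (⟨w + 2, by omega⟩ : Fin n) ∈ S.image π :=
    (Finset.ext_iff.mp himg_eq _).mpr (hmemV _ _ (by omega) (by omega))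
  have hmem2 : (⟨w + 1, by omega⟩ : Fin n) ∈ S.image π :=
    (Finset.ext_iff.mp himg_eq _).mpr (hmemV _ _ (by omega) (by omega))
  obtain ⟨k1, hk1S, hk1⟩ := Finset.mem_image.mp hmem1
  obtain ⟨k2, hk2S, hk2⟩ := Finset.mem_image.mp hmem2
  simp only [hS, Finset.mem_filter, Finset.mem_univ, true_and] at hk1S hk2S
  have hk1v : (π k1 : ℕ) = w + 2 := by rw [hk1]
  have hk2v : (π k2 : ℕ) = w + 1 := by rw [hk2]
  have hk1val : (k1 : ℕ) = w + 1 := by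
    have := hub k1
    omega
  have hk2val : (k2 : ℕ) = w := by
    have := hub k2
    have hne : k2 ≠ k1 := by
      intro hh
      rw [hh] at hk2v
      omega
    have : (k2 : ℕ) ≠ w + 1 := by
      intro hh
      exact hne (Fin.ext (by omega))
    omega
  have hvw : ∀ (h : w < n), (π ⟨w, h⟩ : ℕ) = w + 1 := by
    intro h
    rw [show (⟨w, h⟩ : Fin n) = k2 from Fin.ext (show w = (k2 : ℕ) by omega)]
    omega
  have hvw1 : ∀ (h : w + 1 < n), (π ⟨w + 1, h⟩ : ℕ) = w + 2 := by
    intro h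
    rw [show (⟨w + 1, h⟩ : Fin n) = k1 from Fin.ext (show w + 1 = (k1 : ℕ) by omega)]
    omega
  have hvb : ∀ (h : (b : ℕ) < n), (π ⟨(b : ℕ), h⟩ : ℕ) = w := by
    intro h
    rw [show (⟨(b : ℕ), h⟩ : Fin n) = b from Fin.ext rfl]
  clear himg hScard hVcard himgcard himg_eq hmemV hmem1 hmem2 hk1 hk2 hS hV
  clear S V
  clear_value w
  refine notFishburn hF w (b : ℕ) (by omega) hbn ?_ ?_ ?_
  · rw [Fin.lt_def, hvw, hvw1]
    omega
  · rw [Fin.lt_def, hvw, hvb]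
    omega
  · rw [hvw, hvb]

set_option maxHeartbeats 1000000 in
lemma part1_sig2 (hn : 4 ≤ n) (π : Perm (Fin n)) (hF : IsFishburn π)
    (h321 : Avoids π ![3, 2, 1]) (h1423 : Avoids π ![1, 4, 2, 3])
    (h3124 : Avoids π ![3, 1, 2, 4])
    (hv2 : (π ⟨0, by omega⟩ : ℕ) = 2) : π = sig2 n hn := by
  obtain ⟨zero, hzval, hv2'⟩ : ∃ z : Fin n, (z : ℕ) = 0 ∧ (π z : ℕ) = 2 :=
    ⟨⟨0, by omega⟩, rfl, hv2⟩
  obtain ⟨m, hπm⟩ : ∃ m : Fin n, (π m : ℕ) = 0 :=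
    ⟨π.symm ⟨0, by omega⟩, by rw [Equiv.apply_symm_apply]⟩
  obtain ⟨q, hπq⟩ : ∃ q : Fin n, (π q : ℕ) = 1 :=
    ⟨π.symm ⟨1, by omega⟩, by rw [Equiv.apply_symm_apply]⟩
  have hinj : ∀ x y : Fin n, (π x : ℕ) = (π y : ℕ) → x = y :=
    fun x y h => π.injective (Fin.ext h)
  have hm1 : 1 ≤ (m : ℕ) := by
    by_contra h
    have : m = zero := Fin.ext (by omega)
    rw [this] at hπm
    omega
  have hq1 : 1 ≤ (q : ℕ) := by
    by_contra h
    have : q = zero := Fin.ext (by omega)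
    rw [this] at hπq
    omega
  have hmq : (m : ℕ) < (q : ℕ) := by
    have hne : m ≠ q := fun h => by rw [h] at hπm; omega
    by_contra h
    push_neg at h
    have hqm : (q : ℕ) < (m : ℕ) := by
      rcases h.lt_or_eq with h' | h'
      · exact h'
      · exact absurd (Fin.ext h') hne.symm
    exact not321 h321 (a := zero) (b := q) (c := m) (Fin.lt_def.mpr (by omega))
      (Fin.lt_def.mpr hqm) (Fin.lt_def.mpr (by omega)) (Fin.lt_def.mpr (by omega))
  have hbig : ∀ k : Fin n, (q : ℕ) < (k : ℕ) → (π k : ℕ) < 2 := by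
    intro k hk
    by_contra h
    push_neg at h
    have hne2 : (π k : ℕ) ≠ 2 := by
      intro hh
      have : k = zero := hinj k zero (by omega)
      rw [this] at hk
      omega
    exact not3124 h3124 (a := zero) (b := m) (c := q) (d := k)
      (Fin.lt_def.mpr (by omega)) (Fin.lt_def.mpr hmq) (Fin.lt_def.mpr hk)
      (Fin.lt_def.mpr (by omega)) (Fin.lt_def.mpr (by omega)) (Fin.lt_def.mpr (by omega))
  have hqlast : (q : ℕ) = n - 1 := by
    by_contra h
    have hql : (q : ℕ) + 1 < n := by have := q.isLt; omega
    obtain ⟨k, hkv⟩ : ∃ k : Fin n, (k : ℕ) = (q : ℕ) + 1 := ⟨⟨(q : ℕ) + 1, hql⟩, rfl⟩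
    have := hbig k (by omega)
    rcases (by omega : (π k : ℕ) = 0 ∨ (π k : ℕ) = 1) with h' | h'
    · have hkm : k = m := hinj k m (by omega)
      have := congrArg Fin.val hkm
      omega
    · have hkq : k = q := hinj k q (by omega)
      have := congrArg Fin.val hkq
      omega
  have hval3 : ∀ k : Fin n, (k : ℕ) ≠ 0 → (k : ℕ) ≠ (m : ℕ) → (k : ℕ) ≠ n - 1 →
      3 ≤ (π k : ℕ) := by
    intro k h0 hm' hq'
    have hne0 : (π k : ℕ) ≠ 0 := by
      intro hh
      have := congrArg Fin.val (hinj k m (by omega))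
      omega
    have hne1 : (π k : ℕ) ≠ 1 := by
      intro hh
      have := congrArg Fin.val (hinj k q (by omega))
      omega
    have hne2 : (π k : ℕ) ≠ 2 := by
      intro hh
      have := congrArg Fin.val (hinj k zero (by omega))
      omega
    omega
  have hm1' : (m : ℕ) = 1 := by
    by_contra h
    have hm2 : 2 ≤ (m : ℕ) := by omega
    have h1n : (1 : ℕ) < n := by omega
    have hone : 3 ≤ (π ⟨1, h1n⟩ : ℕ) := hval3 ⟨1, h1n⟩ (by show (1:ℕ) ≠ 0; omega)
      (by show (1:ℕ) ≠ (m : ℕ); omega) (by show (1:ℕ) ≠ n - 1; omega)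
    have hone' : ∀ (hh : 0 + 1 < n), 3 ≤ (π ⟨0 + 1, hh⟩ : ℕ) := fun hh => hone
    have h0v : ∀ (hh : 0 < n), (π ⟨0, hh⟩ : ℕ) = 2 := by
      intro hh
      rw [show (⟨0, hh⟩ : Fin n) = zero from Fin.ext (show (0:ℕ) = (zero : ℕ) by omega)]
      exact hv2'
    have hqv : ∀ (hh : n - 1 < n), (π ⟨n - 1, hh⟩ : ℕ) = 1 := by
      intro hh
      rw [show (⟨n - 1, hh⟩ : Fin n) = q from Fin.ext (show n - 1 = (q : ℕ) by omega)]
      exact hπq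
    refine notFishburn hF 0 (n - 1) (by omega) (by omega) ?_ ?_ ?_
    · rw [Fin.lt_def, h0v]
      exact lt_of_lt_of_le (show (2:ℕ) < 3 by norm_num) (hone' _)
    · rw [Fin.lt_def, h0v, hqv]
      norm_num
    · rw [h0v, hqv]
  have hmono : ∀ k k' : Fin n, 2 ≤ (k : ℕ) → (k : ℕ) < (k' : ℕ) → (k' : ℕ) ≤ n - 2 →
      (π k : ℕ) < (π k' : ℕ) := by
    intro k k' h2 hlt hle
    by_contra hcc
    push_neg at hcc
    have hne : k' ≠ k := fun h => by rw [h] at hlt; omega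
    have hlt' : (π k' : ℕ) < (π k : ℕ) :=
      lt_of_le_of_ne hcc (fun h => hne (hinj _ _ h))
    have h3 : 3 ≤ (π k' : ℕ) := hval3 k' (by omega) (by omega) (by omega)
    exact not321 h321 (a := k) (b := k') (c := q) (Fin.lt_def.mpr hlt)
      (Fin.lt_def.mpr (by omega)) (Fin.lt_def.mpr hlt') (Fin.lt_def.mpr (by omega))
  have htail : ∀ u, ∀ (hu : u < n), 2 ≤ u → u ≤ n - 2 → (π ⟨u, hu⟩ : ℕ) = u + 1 := by
    intro u
    induction u using Nat.strong_induction_on with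
    | _ u IH =>
      intro hu h2u hun
      have huv : ((⟨u, hu⟩ : Fin n) : ℕ) = u := rfl
      have hge3 : 3 ≤ (π ⟨u, hu⟩ : ℕ) := hval3 _ (by omega) (by omega) (by omega)
      have hlow : u + 1 ≤ (π ⟨u, hu⟩ : ℕ) := by
        rcases Nat.eq_or_lt_of_le h2u with h | h
        · omega
        · have hprev := IH (u - 1) (by omega) (by omega) (by omega) (by omega)
          have hm' := hmono ⟨u - 1, by omega⟩ ⟨u, hu⟩ (by show 2 ≤ u - 1; omega)
            (by show u - 1 < u; omega) (by show u ≤ n - 2; omega)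
          have he1 : ((⟨u - 1, by omega⟩ : Fin n) : ℕ) = u - 1 := rfl
          omega
      by_contra hne'
      have hgt : u + 2 ≤ (π ⟨u, hu⟩ : ℕ) := by
        rcases Nat.eq_or_lt_of_le hlow with h | h
        · exact absurd h.symm hne'
        · omega
      have hu1n : u + 1 < n := by omega
      obtain ⟨t, hπt⟩ : ∃ t : Fin n, (π t : ℕ) = u + 1 :=
        ⟨π.symm ⟨u + 1, hu1n⟩, by rw [Equiv.apply_symm_apply]⟩
      have ht0 : (t : ℕ) ≠ 0 := by
        intro h
        have : t = zero := Fin.ext (by omega)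
        rw [this] at hπt
        omega
      have htm' : (t : ℕ) ≠ 1 := by
        intro h
        have : t = m := Fin.ext (by omega)
        rw [this] at hπt
        omega
      have htq : (t : ℕ) ≠ n - 1 := by
        intro h
        have : t = q := Fin.ext (by omega)
        rw [this] at hπt
        omega
      rcases lt_trichotomy (t : ℕ) u with h | h | h
      · have hIH := IH (t : ℕ) h t.isLt (by omega) (by omega)
        have heq : (π ⟨(t : ℕ), t.isLt⟩ : ℕ) = (π t : ℕ) := rfl
        omega
      · have : t = ⟨u, hu⟩ := Fin.ext h
        rw [this] at hπt
        omega
      · have hm' := hmono ⟨u, hu⟩ t (by omega) (by omega) (by omega)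
        omega
  apply Equiv.ext
  intro k
  apply Fin.ext
  rw [sig2_val hn k]
  have hkv := k.isLt
  split_ifs with e0 e1 e2
  · have : k = zero := Fin.ext (by omega)
    rw [this]
    exact hv2'
  · have : k = m := Fin.ext (by omega)
    rw [this]
    exact hπm
  · have : k = q := Fin.ext (by omega)
    rw [this]
    exact hπq
  · have hres := htail (k : ℕ) k.isLt (by omega) (by omega)
    have heq : (π ⟨(k : ℕ), k.isLt⟩ : ℕ) = (π k : ℕ) := rfl
    omega

set_option maxHeartbeats 1000000 in
lemma part1_sig1 (hn : 4 ≤ n) (π : Perm (Fin n)) (hF : IsFishburn π)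
    (h321 : Avoids π ![3, 2, 1]) (h1423 : Avoids π ![1, 4, 2, 3])
    (h3124 : Avoids π ![3, 1, 2, 4])
    (hv3 : 3 ≤ (π ⟨0, by omega⟩ : ℕ)) : π = sig1 n hn := by
  obtain ⟨zero, hzval, hv3'⟩ : ∃ z : Fin n, (z : ℕ) = 0 ∧ 3 ≤ (π z : ℕ) :=
    ⟨⟨0, by omega⟩, rfl, hv3⟩
  obtain ⟨m, hπm⟩ : ∃ m : Fin n, (π m : ℕ) = 0 :=
    ⟨π.symm ⟨0, by omega⟩, by rw [Equiv.apply_symm_apply]⟩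
  obtain ⟨q, hπq⟩ : ∃ q : Fin n, (π q : ℕ) = 1 :=
    ⟨π.symm ⟨1, by omega⟩, by rw [Equiv.apply_symm_apply]⟩
  obtain ⟨r, hπr⟩ : ∃ r : Fin n, (π r : ℕ) = 2 :=
    ⟨π.symm ⟨2, by omega⟩, by rw [Equiv.apply_symm_apply]⟩
  have hinj : ∀ x y : Fin n, (π x : ℕ) = (π y : ℕ) → x = y :=
    fun x y h => π.injective (Fin.ext h)
  have hm1 : 1 ≤ (m : ℕ) := by
    by_contra h
    have : m = zero := Fin.ext (by omega)
    rw [this] at hπm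
    omega
  have hq1 : 1 ≤ (q : ℕ) := by
    by_contra h
    have : q = zero := Fin.ext (by omega)
    rw [this] at hπq
    omega
  have hr1 : 1 ≤ (r : ℕ) := by
    by_contra h
    have : r = zero := Fin.ext (by omega)
    rw [this] at hπr
    omega
  have hmq : (m : ℕ) < (q : ℕ) := by
    have hne : m ≠ q := fun h => by rw [h] at hπm; omega
    by_contra h
    push_neg at h
    have hqm : (q : ℕ) < (m : ℕ) := by
      rcases h.lt_or_eq with h' | h'
      · exact h'
      · exact absurd (Fin.ext h') hne.symm
    exact not321 h321 (a := zero) (b := q) (c := m) (Fin.lt_def.mpr (by omega))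
      (Fin.lt_def.mpr hqm) (Fin.lt_def.mpr (by omega)) (Fin.lt_def.mpr (by omega))
  have hbig : ∀ k : Fin n, (q : ℕ) < (k : ℕ) → (π k : ℕ) < (π zero : ℕ) := by
    intro k hk
    by_contra h
    push_neg at h
    have hne : (π k : ℕ) ≠ (π zero : ℕ) := by
      intro hh
      have := congrArg Fin.val (hinj k zero hh)
      omega
    exact not3124 h3124 (a := zero) (b := m) (c := q) (d := k)
      (Fin.lt_def.mpr (by omega)) (Fin.lt_def.mpr hmq) (Fin.lt_def.mpr hk)
      (Fin.lt_def.mpr (by omega)) (Fin.lt_def.mpr (by omega)) (Fin.lt_def.mpr (by omega))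
  have hrq : (q : ℕ) < (r : ℕ) := by
    have hne : r ≠ q := fun h => by rw [h] at hπr; omega
    by_contra h
    push_neg at h
    have hrq' : (r : ℕ) < (q : ℕ) := by
      rcases h.lt_or_eq with h' | h'
      · exact h'
      · exact absurd (Fin.ext h') hne
    exact not321 h321 (a := zero) (b := r) (c := q) (Fin.lt_def.mpr (by omega))
      (Fin.lt_def.mpr hrq') (Fin.lt_def.mpr (by omega)) (Fin.lt_def.mpr (by omega))
  have h0m : ∀ k : Fin n, 1 ≤ (k : ℕ) → (k : ℕ) < (m : ℕ) → (π zero : ℕ) < (π k : ℕ) := by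
    intro k h1 h2
    by_contra h
    push_neg at h
    have hne : (π k : ℕ) ≠ (π zero : ℕ) := by
      intro hh
      have := congrArg Fin.val (hinj k zero hh)
      omega
    have hne0 : (π k : ℕ) ≠ 0 := by
      intro hh
      have := congrArg Fin.val (hinj k m (by omega))
      omega
    exact not321 h321 (a := zero) (b := k) (c := m) (Fin.lt_def.mpr (by omega))
      (Fin.lt_def.mpr h2) (Fin.lt_def.mpr (by omega)) (Fin.lt_def.mpr (by omega))
  obtain ⟨t, hπt⟩ : ∃ t : Fin n, (π t : ℕ) = (π zero : ℕ) - 1 :=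
    ⟨π.symm ⟨(π zero : ℕ) - 1, by have := (π zero).isLt; omega⟩, by
      rw [Equiv.apply_symm_apply]⟩
  have ht1 : 1 ≤ (t : ℕ) := by
    by_contra h
    have : t = zero := Fin.ext (by omega)
    rw [this] at hπt
    omega
  have htm : (m : ℕ) ≤ (t : ℕ) := by
    by_contra h
    push_neg at h
    have := h0m t ht1 h
    omega
  have htq : (q : ℕ) < (t : ℕ) := by
    have hne1 : t ≠ m := fun h => by rw [h] at hπt; omega
    have hne2 : t ≠ q := fun h => by rw [h] at hπt; omega
    have htm' : (m : ℕ) < (t : ℕ) := by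
      rcases htm.lt_or_eq with h' | h'
      · exact h'
      · exact absurd (Fin.ext h'.symm) hne1
    by_contra h
    push_neg at h
    have htq' : (t : ℕ) < (q : ℕ) := by
      rcases h.lt_or_eq with h' | h'
      · exact h'
      · exact absurd (Fin.ext h') hne2
    exact not321 h321 (a := zero) (b := t) (c := q) (Fin.lt_def.mpr (by omega))
      (Fin.lt_def.mpr htq') (Fin.lt_def.mpr (by omega)) (Fin.lt_def.mpr (by omega))
  have h0v : ∀ (hh : 0 < n), π ⟨0, hh⟩ = π zero := by
    intro hh
    rw [show (⟨0, hh⟩ : Fin n) = zero from Fin.ext (show (0:ℕ) = (zero : ℕ) by omega)]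
  have htv : ∀ (hh : (t : ℕ) < n), (π ⟨(t : ℕ), hh⟩ : ℕ) = (π zero : ℕ) - 1 := by
    intro hh
    rw [show (⟨(t : ℕ), hh⟩ : Fin n) = t from Fin.ext rfl]
    exact hπt
  have hm1' : (m : ℕ) = 1 := by
    by_contra h
    have hm2 : 2 ≤ (m : ℕ) := by omega
    have h1n : (1 : ℕ) < n := by omega
    have hone : (π zero : ℕ) < (π ⟨1, h1n⟩ : ℕ) := h0m ⟨1, h1n⟩
      (by show (1:ℕ) ≤ 1; omega) (by show (1:ℕ) < (m : ℕ); omega)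
    have hone' : ∀ (hh : 0 + 1 < n), (π zero : ℕ) < (π ⟨0 + 1, hh⟩ : ℕ) := fun hh => hone
    refine notFishburn hF 0 (t : ℕ) (by omega) t.isLt ?_ ?_ ?_
    · rw [Fin.lt_def, h0v]
      exact hone' _
    · rw [Fin.lt_def, h0v, htv]
      omega
    · rw [h0v, htv]
      omega
  have hq2 : (q : ℕ) = 2 := by
    have hq2' : 2 ≤ (q : ℕ) := by omega
    by_contra h
    have hq3 : 3 ≤ (q : ℕ) := by omega
    obtain ⟨k, hkv⟩ : ∃ k : Fin n, (k : ℕ) = 2 := ⟨⟨2, by omega⟩, rfl⟩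
    have hk0 : (π k : ℕ) ≠ 0 := by
      intro hh
      have := congrArg Fin.val (hinj k m (by omega))
      omega
    have hk1 : (π k : ℕ) ≠ 1 := by
      intro hh
      have := congrArg Fin.val (hinj k q (by omega))
      omega
    have hk2 : (π k : ℕ) ≠ 2 := by
      intro hh
      have := congrArg Fin.val (hinj k r (by omega))
      omega
    have hkz : (π k : ℕ) ≠ (π zero : ℕ) := by
      intro hh
      have := congrArg Fin.val (hinj k zero hh)
      omega
    rcases lt_trichotomy ((π k : ℕ)) ((π zero : ℕ)) with hlt | heq | hgt
    · exact not321 h321 (a := zero) (b := k) (c := q) (Fin.lt_def.mpr (by omega))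
        (Fin.lt_def.mpr (by omega)) (Fin.lt_def.mpr (by omega)) (Fin.lt_def.mpr (by omega))
    · exact hkz heq
    · exact not1423 h1423 (a := m) (b := k) (c := q) (d := r) (Fin.lt_def.mpr (by omega))
        (Fin.lt_def.mpr (by omega)) (Fin.lt_def.mpr hrq) (Fin.lt_def.mpr (by omega))
        (Fin.lt_def.mpr (by omega)) (Fin.lt_def.mpr (by omega))
  have htmono : ∀ k k' : Fin n, (q : ℕ) < (k : ℕ) → (k : ℕ) < (k' : ℕ) →
      (π k : ℕ) < (π k' : ℕ) := by
    intro k k' h1 h2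
    by_contra hcc
    push_neg at hcc
    have hne : k' ≠ k := fun hh => by rw [hh] at h2; omega
    have hlt' : (π k' : ℕ) < (π k : ℕ) :=
      lt_of_le_of_ne hcc (fun hh => hne (hinj _ _ hh))
    have hb := hbig k h1
    exact not321 h321 (a := zero) (b := k) (c := k') (Fin.lt_def.mpr (by omega))
      (Fin.lt_def.mpr h2) (Fin.lt_def.mpr (by omega)) (Fin.lt_def.mpr hlt')
  have htail : ∀ u, ∀ (hu : u < n), 3 ≤ u → (π ⟨u, hu⟩ : ℕ) = u - 1 := by
    intro u
    induction u using Nat.strong_induction_on with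
    | _ u IH =>
      intro hu h3u
      have huv : ((⟨u, hu⟩ : Fin n) : ℕ) = u := rfl
      have hlow2 : 2 ≤ (π ⟨u, hu⟩ : ℕ) := by
        have hne0 : (π ⟨u, hu⟩ : ℕ) ≠ 0 := by
          intro hh
          have := congrArg Fin.val (hinj ⟨u, hu⟩ m (by omega))
          omega
        have hne1 : (π ⟨u, hu⟩ : ℕ) ≠ 1 := by
          intro hh
          have := congrArg Fin.val (hinj ⟨u, hu⟩ q (by omega))
          omega
        omega
      have hbk := hbig ⟨u, hu⟩ (by omega)
      rcases Nat.eq_or_lt_of_le h3u with h3 | h4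
      · -- u = 3 : show π ⟨u⟩ = 2, i.e. this position is r
        have hr3 : (r : ℕ) = 3 := by
          by_contra hh
          have hrge : 3 ≤ (r : ℕ) := by omega
          have hrgt : u < (r : ℕ) := by omega
          have := htmono ⟨u, hu⟩ r (by omega) (by omega)
          omega
        have : (⟨u, hu⟩ : Fin n) = r := Fin.ext (by omega)
        rw [this, hπr]
        omega
      · have hprev := IH (u - 1) (by omega) (by omega) (by omega)
        have hm' := htmono ⟨u - 1, by omega⟩ ⟨u, hu⟩ (by show (q : ℕ) < u - 1; omega)
          (by show u - 1 < u; omega)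
        have he1 : ((⟨u - 1, by omega⟩ : Fin n) : ℕ) = u - 1 := rfl
        have hlow : u - 1 ≤ (π ⟨u, hu⟩ : ℕ) := by omega
        by_contra hne'
        have hgt : u ≤ (π ⟨u, hu⟩ : ℕ) := by
          rcases Nat.eq_or_lt_of_le hlow with h | h
          · exact absurd h.symm hne'
          · omega
        have hun : u - 1 < n := by omega
        obtain ⟨t', hπt'⟩ : ∃ t' : Fin n, (π t' : ℕ) = u - 1 :=
          ⟨π.symm ⟨u - 1, hun⟩, by rw [Equiv.apply_symm_apply]⟩
        have ht'0 : (t' : ℕ) ≠ 0 := by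
          intro hh
          have : t' = zero := Fin.ext (by omega)
          rw [this] at hπt'
          omega
        have ht'1 : (t' : ℕ) ≠ 1 := by
          intro hh
          have : t' = m := Fin.ext (by omega)
          rw [this] at hπt'
          omega
        have ht'2 : (t' : ℕ) ≠ 2 := by
          intro hh
          have : t' = q := Fin.ext (by omega)
          rw [this] at hπt'
          omega
        rcases lt_trichotomy ((t' : ℕ)) u with h | h | h
        · have hIH := IH (t' : ℕ) h t'.isLt (by omega)
          have heq : (π ⟨(t' : ℕ), t'.isLt⟩ : ℕ) = (π t' : ℕ) := rfl
          omega
        · have : t' = ⟨u, hu⟩ := Fin.ext h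
          rw [this] at hπt'
          omega
        · have hm'' := htmono ⟨u, hu⟩ t' (by omega) (by omega)
          omega
  have hveq : (π zero : ℕ) = n - 1 := by
    by_contra h
    have hvlt : (π zero : ℕ) ≤ n - 2 := by have := (π zero).isLt; omega
    have hv1n : (π zero : ℕ) + 1 < n := by omega
    have := htail ((π zero : ℕ) + 1) hv1n (by omega)
    have heq0 : (⟨(π zero : ℕ) + 1, hv1n⟩ : Fin n) = zero := hinj _ _ (by omega)
    have := congrArg Fin.val heq0
    simp only at this
    omega
  apply Equiv.ext
  intro k
  apply Fin.ext
  rw [sig1_val hn k]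
  have hkv := k.isLt
  split_ifs with e0
  · have : k = zero := Fin.ext (by omega)
    rw [this]
    omega
  · rcases (by omega : (k : ℕ) = 1 ∨ (k : ℕ) = 2 ∨ 3 ≤ (k : ℕ)) with h | h | h
    · have : k = m := Fin.ext (by omega)
      rw [this]
      omega
    · have : k = q := Fin.ext (by omega)
      rw [this]
      omega
    · have := htail (k : ℕ) k.isLt h
      have heq : (π ⟨(k : ℕ), k.isLt⟩ : ℕ) = (π k : ℕ) := rfl
      omega
end Hard

section Assemble
open Equiv Finset
variable {n : ℕ}

lemma classify (hn : 4 ≤ n) (π : Perm (Fin n)) (hF : IsFishburn π)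
    (h321 : Avoids π ![3, 2, 1]) (h1423 : Avoids π ![1, 4, 2, 3])
    (h3124 : Avoids π ![3, 1, 2, 4]) :
    AdjPerm π ∨ π = sig1 n hn ∨ π = sig2 n hn := by
  rcases (by omega : (π ⟨0, by omega⟩ : ℕ) ≤ 1 ∨ (π ⟨0, by omega⟩ : ℕ) = 2 ∨
      3 ≤ (π ⟨0, by omega⟩ : ℕ)) with h | h | h
  · left
    have hub := claim_a hn π hF h321 h1423 h
    exact fun i => ⟨hub i, claim_b hn π hF hub i⟩
  · right; right
    exact part1_sig2 hn π hF h321 h1423 h3124 h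
  · right; left
    exact part1_sig1 hn π hF h321 h1423 h3124 h

lemma sig1_val_zero (hn : 4 ≤ n) : ((sig1 n hn) ⟨0, by omega⟩ : ℕ) = n - 1 := by
  rw [sig1_val hn]
  simp

lemma sig2_val_zero (hn : 4 ≤ n) : ((sig2 n hn) ⟨0, by omega⟩ : ℕ) = 2 := by
  rw [sig2_val hn]
  simp

lemma sig1_not_adj (hn : 4 ≤ n) : ¬ AdjPerm (sig1 n hn) := by
  intro hA
  have h1 := (hA ⟨0, by omega⟩).1
  have h2 : (((⟨0, by omega⟩ : Fin n)) : ℕ) = 0 := rfl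
  have h3 := sig1_val_zero hn
  omega

lemma sig2_not_adj (hn : 4 ≤ n) : ¬ AdjPerm (sig2 n hn) := by
  intro hA
  have h1 := (hA ⟨0, by omega⟩).1
  have h2 : (((⟨0, by omega⟩ : Fin n)) : ℕ) = 0 := rfl
  have h3 := sig2_val_zero hn
  omega

lemma sig1_ne_sig2 (hn : 4 ≤ n) : sig1 n hn ≠ sig2 n hn := by
  intro h
  have := congrArg (fun σ : Perm (Fin n) => (σ ⟨0, by omega⟩ : ℕ)) h
  rw [sig1_val_zero hn, sig2_val_zero hn] at this
  omega

end Assemble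

theorem fishburn_321_1423_3124 (n : ℕ) (hn : 4 ≤ n) :
    {π : Equiv.Perm (Fin n) | IsFishburn π ∧ Avoids π ![3, 2, 1] ∧ Avoids π ![1, 4, 2, 3] ∧ Avoids π ![3, 1, 2, 4]}.ncard = Nat.fib (n + 1) + 2 := by
  classical
  set F : Finset (Equiv.Perm (Fin n)) :=
    (Finset.univ.filter fun π => AdjPerm π) ∪ {sig1 n hn, sig2 n hn} with hF
  have hset : {π : Equiv.Perm (Fin n) | IsFishburn π ∧ Avoids π ![3, 2, 1] ∧
      Avoids π ![1, 4, 2, 3] ∧ Avoids π ![3, 1, 2, 4]} = ↑F := by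
    ext π
    simp only [Set.mem_setOf_eq, hF, Finset.coe_union, Set.mem_union, Finset.coe_filter,
      Finset.mem_univ, true_and, Finset.coe_insert, Set.mem_insert_iff, Finset.coe_singleton,
      Set.mem_singleton_iff]
    constructor
    · rintro ⟨h1, h2, h3, h4⟩
      exact classify hn π h1 h2 h3 h4
    · rintro (hA | rfl | rfl)
      · exact adj_memb hA
      · exact sig1_memb hn
      · exact sig2_memb hn
  rw [hset, Set.ncard_coe_finset]
  have hdisj : Disjoint (Finset.univ.filter fun π : Equiv.Perm (Fin n) => AdjPerm π)
      ({sig1 n hn, sig2 n hn} : Finset (Equiv.Perm (Fin n))) := by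
    rw [Finset.disjoint_right]
    intro π hπ hπ'
    simp only [Finset.mem_insert, Finset.mem_singleton] at hπ
    simp only [Finset.mem_filter, Finset.mem_univ, true_and] at hπ'
    rcases hπ with rfl | rfl
    · exact sig1_not_adj hn hπ'
    · exact sig2_not_adj hn hπ'
  rw [hF, Finset.card_union_of_disjoint hdisj, Finset.card_pair (sig1_ne_sig2 hn)]
  have : (Finset.univ.filter fun π : Equiv.Perm (Fin n) => AdjPerm π).card = Nat.fib (n + 1) := by
    rw [← adjCount_eq_fib n, adjCount]
  omega
end

section
/- For n ≥ 1, the number of Fishburn permutations of length n avoiding the classical patterns 321, 1423, and 4123 equals F_{n+1} − 1, where F_n is the n-th Fibonacci number with F_0 = F_1 = 1. -/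
set_option maxRecDepth 10000
set_option maxHeartbeats 2000000
set_option linter.unnecessarySeqFocus false

open Equiv

lemma contains321_iff {n : ℕ} (π : Perm (Fin n)) :
    Contains π ![3,2,1] ↔ ∃ a b c : ℕ, ∃ (ha : a < n) (hb : b < n) (hc : c < n),
      a < b ∧ b < c ∧ (π ⟨b,hb⟩ : ℕ) < π ⟨a,ha⟩ ∧ (π ⟨c,hc⟩ : ℕ) < π ⟨b,hb⟩ := by
  constructor
  · rintro ⟨f, hf, hv⟩
    have h1 : π (f 2) < π (f 1) := (hv 2 1).mp (by decide)
    have h2 : π (f 1) < π (f 0) := (hv 1 0).mp (by decide)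
    have m1 : f 0 < f 1 := hf (by decide)
    have m2 : f 1 < f 2 := hf (by decide)
    exact ⟨f 0, f 1, f 2, (f 0).isLt, (f 1).isLt, (f 2).isLt,
      m1, m2, by simpa using h2, by simpa using h1⟩
  · rintro ⟨a, b, c, ha, hb, hc, hab, hbc, h2, h1⟩
    refine ⟨fun x => if (x:ℕ) = 0 then ⟨a,ha⟩ else if (x:ℕ) = 1 then ⟨b,hb⟩ else ⟨c,hc⟩, ?_, ?_⟩
    · intro x y hxy
      rw [Fin.lt_def] at hxy ⊢
      fin_cases x <;> fin_cases y <;>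
        (try simp only [Fin.val_mk, Nat.reduceEqDiff, reduceIte, Fin.isValue] at hxy ⊢) <;> omega
    · intro x y
      fin_cases x <;> fin_cases y <;>
        (first | exact iff_of_true (by decide)
                  (by simp only [Fin.val_mk, Nat.reduceEqDiff, reduceIte, Fin.lt_def]; omega)
               | exact iff_of_false (by decide)
                  (by simp only [Fin.val_mk, Nat.reduceEqDiff, reduceIte, Fin.lt_def, not_lt]; omega))

lemma contains1423_iff {n : ℕ} (π : Perm (Fin n)) :
    Contains π ![1,4,2,3] ↔ ∃ a b c d : ℕ, ∃ (ha : a < n) (hb : b < n) (hc : c < n) (hd : d < n),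
      a < b ∧ b < c ∧ c < d ∧
      (π ⟨a,ha⟩ : ℕ) < π ⟨c,hc⟩ ∧ (π ⟨c,hc⟩ : ℕ) < π ⟨d,hd⟩ ∧ (π ⟨d,hd⟩ : ℕ) < π ⟨b,hb⟩ := by
  constructor
  · rintro ⟨f, hf, hv⟩
    have h1 : π (f 0) < π (f 2) := (hv 0 2).mp (by decide)
    have h2 : π (f 2) < π (f 3) := (hv 2 3).mp (by decide)
    have h3 : π (f 3) < π (f 1) := (hv 3 1).mp (by decide)
    have m1 : f 0 < f 1 := hf (by decide)
    have m2 : f 1 < f 2 := hf (by decide)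
    have m3 : f 2 < f 3 := hf (by decide)
    exact ⟨f 0, f 1, f 2, f 3, (f 0).isLt, (f 1).isLt, (f 2).isLt, (f 3).isLt,
      m1, m2, m3, by simpa using h1, by simpa using h2, by simpa using h3⟩
  · rintro ⟨a, b, c, d, ha, hb, hc, hd, hab, hbc, hcd, h1, h2, h3⟩
    refine ⟨fun x => if (x:ℕ) = 0 then ⟨a,ha⟩ else if (x:ℕ) = 1 then ⟨b,hb⟩
      else if (x:ℕ) = 2 then ⟨c,hc⟩ else ⟨d,hd⟩, ?_, ?_⟩
    · intro x y hxy
      rw [Fin.lt_def] at hxy ⊢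
      fin_cases x <;> fin_cases y <;>
        (try simp only [Fin.val_mk, Nat.reduceEqDiff, reduceIte, Fin.isValue] at hxy ⊢) <;> omega
    · intro x y
      fin_cases x <;> fin_cases y <;>
        (first | exact iff_of_true (by decide)
                  (by simp only [Fin.val_mk, Nat.reduceEqDiff, reduceIte, Fin.lt_def]; omega)
               | exact iff_of_false (by decide)
                  (by simp only [Fin.val_mk, Nat.reduceEqDiff, reduceIte, Fin.lt_def, not_lt]; omega))

lemma contains4123_iff {n : ℕ} (π : Perm (Fin n)) :
    Contains π ![4,1,2,3] ↔ ∃ a b c d : ℕ, ∃ (ha : a < n) (hb : b < n) (hc : c < n) (hd : d < n),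
      a < b ∧ b < c ∧ c < d ∧
      (π ⟨b,hb⟩ : ℕ) < π ⟨c,hc⟩ ∧ (π ⟨c,hc⟩ : ℕ) < π ⟨d,hd⟩ ∧ (π ⟨d,hd⟩ : ℕ) < π ⟨a,ha⟩ := by
  constructor
  · rintro ⟨f, hf, hv⟩
    have h1 : π (f 1) < π (f 2) := (hv 1 2).mp (by decide)
    have h2 : π (f 2) < π (f 3) := (hv 2 3).mp (by decide)
    have h3 : π (f 3) < π (f 0) := (hv 3 0).mp (by decide)
    have m1 : f 0 < f 1 := hf (by decide)
    have m2 : f 1 < f 2 := hf (by decide)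
    have m3 : f 2 < f 3 := hf (by decide)
    exact ⟨f 0, f 1, f 2, f 3, (f 0).isLt, (f 1).isLt, (f 2).isLt, (f 3).isLt,
      m1, m2, m3, by simpa using h1, by simpa using h2, by simpa using h3⟩
  · rintro ⟨a, b, c, d, ha, hb, hc, hd, hab, hbc, hcd, h1, h2, h3⟩
    refine ⟨fun x => if (x:ℕ) = 0 then ⟨a,ha⟩ else if (x:ℕ) = 1 then ⟨b,hb⟩
      else if (x:ℕ) = 2 then ⟨c,hc⟩ else ⟨d,hd⟩, ?_, ?_⟩
    · intro x y hxy
      rw [Fin.lt_def] at hxy ⊢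
      fin_cases x <;> fin_cases y <;>
        (try simp only [Fin.val_mk, Nat.reduceEqDiff, reduceIte, Fin.isValue] at hxy ⊢) <;> omega
    · intro x y
      fin_cases x <;> fin_cases y <;>
        (first | exact iff_of_true (by decide)
                  (by simp only [Fin.val_mk, Nat.reduceEqDiff, reduceIte, Fin.lt_def]; omega)
               | exact iff_of_false (by decide)
                  (by simp only [Fin.val_mk, Nat.reduceEqDiff, reduceIte, Fin.lt_def, not_lt]; omega))

lemma isFishburn_iff {n : ℕ} (π : Perm (Fin n)) :
    IsFishburn π ↔ ∀ i j : ℕ, ∀ (hij : i + 1 < j) (hj : j < n),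
      (π ⟨i, by omega⟩ : ℕ) < π ⟨i+1, by omega⟩ → (π ⟨j, hj⟩ : ℕ) < π ⟨i, by omega⟩ →
      (π ⟨i, by omega⟩ : ℕ) ≠ (π ⟨j, hj⟩ : ℕ) + 1 := by
  constructor
  · intro h i j hij hj h1 h2 he
    exact h ⟨i, j, hij, hj, h1, h2, he⟩
  · rintro h ⟨i, j, hij, hj, h1, h2, he⟩
    exact h i j hij hj h1 h2 he

variable {m : ℕ}

def extFun (σ : Perm (Fin m)) : Fin (m+1) → Fin (m+1) :=
  fun i => if h : (i:ℕ) < m then ⟨σ ⟨i, h⟩, by omega⟩ else ⟨m, by omega⟩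

noncomputable def extPerm (σ : Perm (Fin m)) : Perm (Fin (m+1)) :=
  Equiv.ofBijective (extFun σ) (by
    rw [← Finite.injective_iff_bijective]
    intro x y hxy
    have hv : ((extFun σ x) : ℕ) = extFun σ y := congrArg Fin.val hxy
    unfold extFun at hv
    ext
    by_cases h1 : (x:ℕ) < m <;> by_cases h2 : (y:ℕ) < m
    · rw [dif_pos h1, dif_pos h2] at hv
      simp only [Fin.val_mk] at hv
      have h3 : σ ⟨x, h1⟩ = σ ⟨y, h2⟩ := Fin.ext hv
      have h4 : (⟨(x:ℕ), h1⟩ : Fin m) = ⟨(y:ℕ), h2⟩ := σ.injective h3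
      have h5 : (x:ℕ) = (y:ℕ) := congrArg (fun z : Fin m => z.val) h4
      exact h5
    · rw [dif_pos h1, dif_neg h2] at hv
      simp only [Fin.val_mk] at hv
      have := (σ ⟨x, h1⟩).isLt; omega
    · rw [dif_neg h1, dif_pos h2] at hv
      simp only [Fin.val_mk] at hv
      have := (σ ⟨y, h2⟩).isLt; omega
    · omega)

lemma extPerm_val (σ : Perm (Fin m)) (i : ℕ) (h : i < m+1) :
    ((extPerm σ) ⟨i, h⟩ : ℕ) = if h' : i < m then (σ ⟨i, h'⟩ : ℕ) else m := by
  show ((extFun σ) ⟨i, h⟩ : ℕ) = if h' : i < m then (σ ⟨i, h'⟩ : ℕ) else m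
  unfold extFun
  split_ifs <;> rfl

def ext2Fun (σ : Perm (Fin m)) : Fin (m+2) → Fin (m+2) :=
  fun i => if h : (i:ℕ) < m then ⟨σ ⟨i, h⟩, by omega⟩
    else if (i:ℕ) = m then ⟨m+1, by omega⟩ else ⟨m, by omega⟩

noncomputable def ext2Perm (σ : Perm (Fin m)) : Perm (Fin (m+2)) :=
  Equiv.ofBijective (ext2Fun σ) (by
    rw [← Finite.injective_iff_bijective]
    intro x y hxy
    have hv : ((ext2Fun σ x) : ℕ) = ext2Fun σ y := congrArg Fin.val hxy
    unfold ext2Fun at hv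
    have hx := x.isLt
    have hy := y.isLt
    ext
    by_cases h1 : (x:ℕ) < m <;> by_cases h2 : (y:ℕ) < m
    · rw [dif_pos h1, dif_pos h2] at hv
      simp only [Fin.val_mk] at hv
      have h3 : σ ⟨x, h1⟩ = σ ⟨y, h2⟩ := Fin.ext hv
      have h4 : (⟨(x:ℕ), h1⟩ : Fin m) = ⟨(y:ℕ), h2⟩ := σ.injective h3
      have h5 : (x:ℕ) = (y:ℕ) := congrArg (fun z : Fin m => z.val) h4
      exact h5
    · rw [dif_pos h1, dif_neg h2] at hv
      have := (σ ⟨x, h1⟩).isLt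
      split_ifs at hv <;> simp only [Fin.val_mk] at hv <;> omega
    · rw [dif_neg h1, dif_pos h2] at hv
      have := (σ ⟨y, h2⟩).isLt
      split_ifs at hv <;> simp only [Fin.val_mk] at hv <;> omega
    · rw [dif_neg h1, dif_neg h2] at hv
      split_ifs at hv <;> simp only [Fin.val_mk] at hv <;> omega)

lemma ext2Perm_val (σ : Perm (Fin m)) (i : ℕ) (h : i < m+2) :
    ((ext2Perm σ) ⟨i, h⟩ : ℕ) =
      if h' : i < m then (σ ⟨i, h'⟩ : ℕ) else if i = m then m+1 else m := by
  show ((ext2Fun σ) ⟨i, h⟩ : ℕ) = if h' : i < m then (σ ⟨i, h'⟩ : ℕ) else if i = m then m+1 else m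
  unfold ext2Fun
  split_ifs <;> rfl

def specialFun (m : ℕ) : Fin (m+3) → Fin (m+3) :=
  fun i => if (i:ℕ) = 0 then ⟨2, by omega⟩ else if (i:ℕ) = 1 then ⟨0, by omega⟩
    else if h : (i:ℕ) = m+2 then ⟨1, by omega⟩ else ⟨(i:ℕ)+1, by have := i.isLt; omega⟩

noncomputable def specialPerm (m : ℕ) : Perm (Fin (m+3)) :=
  Equiv.ofBijective (specialFun m) (by
    rw [← Finite.injective_iff_bijective]
    intro x y hxy
    have hv : ((specialFun m x) : ℕ) = specialFun m y := congrArg Fin.val hxy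
    unfold specialFun at hv
    have hx := x.isLt
    have hy := y.isLt
    ext
    split_ifs at hv <;> simp only [Fin.val_mk] at hv <;> omega)

lemma specialPerm_val (m : ℕ) (i : ℕ) (h : i < m+3) :
    ((specialPerm m) ⟨i, h⟩ : ℕ) =
      if i = 0 then 2 else if i = 1 then 0 else if i = m+2 then 1 else i+1 := by
  show ((specialFun m) ⟨i, h⟩ : ℕ) = if i = 0 then 2 else if i = 1 then 0 else if i = m+2 then 1 else i+1
  unfold specialFun
  split_ifs <;> rfl

/-! ### Part C : predicates and FS -/

def FS (n : ℕ) : Set (Perm (Fin n)) :=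
  {π | IsFishburn π ∧ Avoids π ![3,2,1] ∧ Avoids π ![1,4,2,3] ∧ Avoids π ![4,1,2,3]}

section Preds
variable {n : ℕ}

def N321 (π : Perm (Fin n)) : Prop := ∀ a b c : ℕ, ∀ (ha : a < n) (hb : b < n) (hc : c < n),
  a < b → b < c → (π ⟨b,hb⟩:ℕ) < π ⟨a,ha⟩ → (π ⟨c,hc⟩:ℕ) < π ⟨b,hb⟩ → False

def N1423 (π : Perm (Fin n)) : Prop := ∀ a b c d : ℕ,
  ∀ (ha : a < n) (hb : b < n) (hc : c < n) (hd : d < n), a < b → b < c → c < d →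
  (π ⟨a,ha⟩:ℕ) < π ⟨c,hc⟩ → (π ⟨c,hc⟩:ℕ) < π ⟨d,hd⟩ → (π ⟨d,hd⟩:ℕ) < π ⟨b,hb⟩ → False

def N4123 (π : Perm (Fin n)) : Prop := ∀ a b c d : ℕ,
  ∀ (ha : a < n) (hb : b < n) (hc : c < n) (hd : d < n), a < b → b < c → c < d →
  (π ⟨b,hb⟩:ℕ) < π ⟨c,hc⟩ → (π ⟨c,hc⟩:ℕ) < π ⟨d,hd⟩ → (π ⟨d,hd⟩:ℕ) < π ⟨a,ha⟩ → False

def NFish (π : Perm (Fin n)) : Prop := ∀ i j : ℕ, ∀ (hij : i + 1 < j) (hj : j < n),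
  (π ⟨i, by omega⟩:ℕ) < π ⟨i+1, by omega⟩ → (π ⟨j,hj⟩:ℕ) < π ⟨i, by omega⟩ →
  (π ⟨i, by omega⟩:ℕ) = (π ⟨j,hj⟩:ℕ) + 1 → False

lemma mem_FS_iff (π : Perm (Fin n)) :
    π ∈ FS n ↔ NFish π ∧ N321 π ∧ N1423 π ∧ N4123 π := by
  unfold FS
  simp only [Set.mem_setOf_eq]
  constructor
  · rintro ⟨hf, h1, h2, h3⟩
    refine ⟨?_, ?_, ?_, ?_⟩
    · intro i j hij hj w1 w2 we
      exact (isFishburn_iff π).mp hf i j hij hj w1 w2 we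
    · intro a b c ha hb hc hab hbc v1 v2
      exact h1 ((contains321_iff π).mpr ⟨a,b,c,ha,hb,hc,hab,hbc,v1,v2⟩)
    · intro a b c d ha hb hc hd hab hbc hcd v1 v2 v3
      exact h2 ((contains1423_iff π).mpr ⟨a,b,c,d,ha,hb,hc,hd,hab,hbc,hcd,v1,v2,v3⟩)
    · intro a b c d ha hb hc hd hab hbc hcd v1 v2 v3
      exact h3 ((contains4123_iff π).mpr ⟨a,b,c,d,ha,hb,hc,hd,hab,hbc,hcd,v1,v2,v3⟩)
  · rintro ⟨hf, h1, h2, h3⟩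
    refine ⟨?_, ?_, ?_, ?_⟩
    · exact (isFishburn_iff π).mpr (fun i j hij hj w1 w2 we => hf i j hij hj w1 w2 we)
    · intro hc
      obtain ⟨a,b,c,ha,hb,hc',hab,hbc,v1,v2⟩ := (contains321_iff π).mp hc
      exact h1 a b c ha hb hc' hab hbc v1 v2
    · intro hc
      obtain ⟨a,b,c,d,ha,hb,hc',hd,hab,hbc,hcd,v1,v2,v3⟩ := (contains1423_iff π).mp hc
      exact h2 a b c d ha hb hc' hd hab hbc hcd v1 v2 v3
    · intro hc
      obtain ⟨a,b,c,d,ha,hb,hc',hd,hab,hbc,hcd,v1,v2,v3⟩ := (contains4123_iff π).mp hc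
      exact h3 a b c d ha hb hc' hd hab hbc hcd v1 v2 v3

/-- values at distinct positions are distinct -/
lemma val_ne (π : Perm (Fin n)) {i j : ℕ} (hi : i < n) (hj : j < n) (hne : i ≠ j) :
    (π ⟨i,hi⟩:ℕ) ≠ (π ⟨j,hj⟩:ℕ) := by
  intro h
  have := π.injective (Fin.ext h : π ⟨i,hi⟩ = π ⟨j,hj⟩)
  exact hne (congrArg Fin.val this)

end Preds

/-! ### Part D : extPerm transfer -/

attribute [irreducible] extPerm ext2Perm specialPerm

section ExtD
variable {m : ℕ}

lemma extPerm_val_eq (σ : Perm (Fin m)) (i : ℕ) (h : i < m+1) (h' : i < m) :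
    ((extPerm σ) ⟨i,h⟩:ℕ) = σ ⟨i,h'⟩ := by
  rw [extPerm_val, dif_pos h']

lemma extPerm_val_top (σ : Perm (Fin m)) (i : ℕ) (h : i < m+1) (h' : ¬ i < m) :
    ((extPerm σ) ⟨i,h⟩:ℕ) = m := by
  rw [extPerm_val, dif_neg h']

lemma extPerm_mem (σ : Perm (Fin m)) : extPerm σ ∈ FS (m+1) ↔ σ ∈ FS m := by
  rw [mem_FS_iff, mem_FS_iff]
  constructor
  · rintro ⟨hf, h1, h2, h3⟩
    refine ⟨?_, ?_, ?_, ?_⟩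
    · intro i j hij hj w1 w2 we
      refine hf i j hij (by omega) ?_ ?_ ?_
      · rw [extPerm_val_eq σ i (by omega) (by omega), extPerm_val_eq σ (i+1) (by omega) (by omega)]
        exact w1
      · rw [extPerm_val_eq σ j (by omega) (by omega), extPerm_val_eq σ i (by omega) (by omega)]
        exact w2
      · rw [extPerm_val_eq σ i (by omega) (by omega), extPerm_val_eq σ j (by omega) (by omega)]
        exact we
    · intro a b c ha hb hc hab hbc v1 v2
      refine h1 a b c (by omega) (by omega) (by omega) hab hbc ?_ ?_
      · rw [extPerm_val_eq σ b (by omega) hb, extPerm_val_eq σ a (by omega) ha]; exact v1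
      · rw [extPerm_val_eq σ c (by omega) hc, extPerm_val_eq σ b (by omega) hb]; exact v2
    · intro a b c d ha hb hc hd hab hbc hcd v1 v2 v3
      refine h2 a b c d (by omega) (by omega) (by omega) (by omega) hab hbc hcd ?_ ?_ ?_
      · rw [extPerm_val_eq σ a (by omega) ha, extPerm_val_eq σ c (by omega) hc]; exact v1
      · rw [extPerm_val_eq σ c (by omega) hc, extPerm_val_eq σ d (by omega) hd]; exact v2
      · rw [extPerm_val_eq σ d (by omega) hd, extPerm_val_eq σ b (by omega) hb]; exact v3
    · intro a b c d ha hb hc hd hab hbc hcd v1 v2 v3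
      refine h3 a b c d (by omega) (by omega) (by omega) (by omega) hab hbc hcd ?_ ?_ ?_
      · rw [extPerm_val_eq σ b (by omega) hb, extPerm_val_eq σ c (by omega) hc]; exact v1
      · rw [extPerm_val_eq σ c (by omega) hc, extPerm_val_eq σ d (by omega) hd]; exact v2
      · rw [extPerm_val_eq σ d (by omega) hd, extPerm_val_eq σ a (by omega) ha]; exact v3
  · rintro ⟨hf, h1, h2, h3⟩
    refine ⟨?_, ?_, ?_, ?_⟩
    · intro i j hij hj w1 w2 we
      by_cases hjm : j < m
      · have hi : i < m := by omega
        have hi1 : i + 1 < m := by omega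
        rw [extPerm_val_eq σ i (by omega) hi, extPerm_val_eq σ (i+1) (by omega) hi1] at w1
        rw [extPerm_val_eq σ j (by omega) hjm, extPerm_val_eq σ i (by omega) hi] at w2
        rw [extPerm_val_eq σ i (by omega) hi, extPerm_val_eq σ j (by omega) hjm] at we
        exact hf i j hij hjm w1 w2 we
      · have hi : i < m := by omega
        rw [extPerm_val_top σ j hj hjm, extPerm_val_eq σ i (by omega) hi] at w2
        have := (σ ⟨i, hi⟩).isLt
        omega
    · intro a b c ha hb hc hab hbc v1 v2
      by_cases hcm : c < m
      · have ham : a < m := by omega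
        have hbm : b < m := by omega
        rw [extPerm_val_eq σ b hb hbm, extPerm_val_eq σ a ha ham] at v1
        rw [extPerm_val_eq σ c hc hcm, extPerm_val_eq σ b hb hbm] at v2
        exact h1 a b c ham hbm hcm hab hbc v1 v2
      · have hbm : b < m := by omega
        rw [extPerm_val_top σ c hc hcm, extPerm_val_eq σ b (by omega) hbm] at v2
        have := (σ ⟨b, hbm⟩).isLt
        omega
    · intro a b c d ha hb hc hd hab hbc hcd v1 v2 v3
      by_cases hdm : d < m
      · have ham : a < m := by omega
        have hbm : b < m := by omega
        have hcm : c < m := by omega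
        rw [extPerm_val_eq σ a ha ham, extPerm_val_eq σ c hc hcm] at v1
        rw [extPerm_val_eq σ c hc hcm, extPerm_val_eq σ d hd hdm] at v2
        rw [extPerm_val_eq σ d hd hdm, extPerm_val_eq σ b hb hbm] at v3
        exact h2 a b c d ham hbm hcm hdm hab hbc hcd v1 v2 v3
      · have hbm : b < m := by omega
        rw [extPerm_val_top σ d hd hdm, extPerm_val_eq σ b (by omega) hbm] at v3
        have := (σ ⟨b, hbm⟩).isLt
        omega
    · intro a b c d ha hb hc hd hab hbc hcd v1 v2 v3
      by_cases hdm : d < m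
      · have ham : a < m := by omega
        have hbm : b < m := by omega
        have hcm : c < m := by omega
        rw [extPerm_val_eq σ b hb hbm, extPerm_val_eq σ c hc hcm] at v1
        rw [extPerm_val_eq σ c hc hcm, extPerm_val_eq σ d hd hdm] at v2
        rw [extPerm_val_eq σ d hd hdm, extPerm_val_eq σ a ha ham] at v3
        exact h3 a b c d ham hbm hcm hdm hab hbc hcd v1 v2 v3
      · have ham : a < m := by omega
        rw [extPerm_val_top σ d hd hdm, extPerm_val_eq σ a (by omega) ham] at v3
        have := (σ ⟨a, ham⟩).isLt
        omega

end ExtD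

/-! ### Part E : ext2Perm transfer -/

section ExtE
variable {m : ℕ}

lemma ext2Perm_val_eq (σ : Perm (Fin m)) (i : ℕ) (h : i < m+2) (h' : i < m) :
    ((ext2Perm σ) ⟨i,h⟩:ℕ) = σ ⟨i,h'⟩ := by
  rw [ext2Perm_val, dif_pos h']

lemma ext2Perm_val_m (σ : Perm (Fin m)) (h : m < m+2) :
    ((ext2Perm σ) ⟨m,h⟩:ℕ) = m+1 := by
  rw [ext2Perm_val, dif_neg (lt_irrefl m), if_pos rfl]

lemma ext2Perm_val_m1 (σ : Perm (Fin m)) (h : m+1 < m+2) :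
    ((ext2Perm σ) ⟨m+1,h⟩:ℕ) = m := by
  rw [ext2Perm_val, dif_neg (by omega), if_neg (by omega)]

lemma ext2Perm_val_m' (σ : Perm (Fin m)) {i : ℕ} (h : i < m+2) (he : i = m) :
    ((ext2Perm σ) ⟨i,h⟩:ℕ) = m+1 := by
  rw [ext2Perm_val, dif_neg (by omega), if_pos he]

lemma ext2Perm_val_m1' (σ : Perm (Fin m)) {i : ℕ} (h : i < m+2) (he : i = m+1) :
    ((ext2Perm σ) ⟨i,h⟩:ℕ) = m := by
  rw [ext2Perm_val, dif_neg (by omega), if_neg (by omega)]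

lemma ext2Perm_mem (σ : Perm (Fin m)) : ext2Perm σ ∈ FS (m+2) ↔ σ ∈ FS m := by
  rw [mem_FS_iff, mem_FS_iff]
  constructor
  · rintro ⟨hf, h1, h2, h3⟩
    refine ⟨?_, ?_, ?_, ?_⟩
    · intro i j hij hj w1 w2 we
      refine hf i j hij (by omega) ?_ ?_ ?_
      · rw [ext2Perm_val_eq σ i (by omega) (by omega), ext2Perm_val_eq σ (i+1) (by omega) (by omega)]
        exact w1
      · rw [ext2Perm_val_eq σ j (by omega) (by omega), ext2Perm_val_eq σ i (by omega) (by omega)]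
        exact w2
      · rw [ext2Perm_val_eq σ i (by omega) (by omega), ext2Perm_val_eq σ j (by omega) (by omega)]
        exact we
    · intro a b c ha hb hc hab hbc v1 v2
      refine h1 a b c (by omega) (by omega) (by omega) hab hbc ?_ ?_
      · rw [ext2Perm_val_eq σ b (by omega) hb, ext2Perm_val_eq σ a (by omega) ha]; exact v1
      · rw [ext2Perm_val_eq σ c (by omega) hc, ext2Perm_val_eq σ b (by omega) hb]; exact v2
    · intro a b c d ha hb hc hd hab hbc hcd v1 v2 v3
      refine h2 a b c d (by omega) (by omega) (by omega) (by omega) hab hbc hcd ?_ ?_ ?_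
      · rw [ext2Perm_val_eq σ a (by omega) ha, ext2Perm_val_eq σ c (by omega) hc]; exact v1
      · rw [ext2Perm_val_eq σ c (by omega) hc, ext2Perm_val_eq σ d (by omega) hd]; exact v2
      · rw [ext2Perm_val_eq σ d (by omega) hd, ext2Perm_val_eq σ b (by omega) hb]; exact v3
    · intro a b c d ha hb hc hd hab hbc hcd v1 v2 v3
      refine h3 a b c d (by omega) (by omega) (by omega) (by omega) hab hbc hcd ?_ ?_ ?_
      · rw [ext2Perm_val_eq σ b (by omega) hb, ext2Perm_val_eq σ c (by omega) hc]; exact v1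
      · rw [ext2Perm_val_eq σ c (by omega) hc, ext2Perm_val_eq σ d (by omega) hd]; exact v2
      · rw [ext2Perm_val_eq σ d (by omega) hd, ext2Perm_val_eq σ a (by omega) ha]; exact v3
  · rintro ⟨hf, h1, h2, h3⟩
    refine ⟨?_, ?_, ?_, ?_⟩
    · intro i j hij hj w1 w2 we
      rcases (by omega : j < m ∨ j = m ∨ j = m+1) with hjm | hjm | hjm
      · have hi : i < m := by omega
        have hi1 : i + 1 < m := by omega
        rw [ext2Perm_val_eq σ i (by omega) hi, ext2Perm_val_eq σ (i+1) (by omega) hi1] at w1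
        rw [ext2Perm_val_eq σ j (by omega) hjm, ext2Perm_val_eq σ i (by omega) hi] at w2
        exact hf i j hij hjm w1 w2 (by
          rw [ext2Perm_val_eq σ i (by omega) hi, ext2Perm_val_eq σ j (by omega) hjm] at we
          exact we)
      · -- j = m : value m+1 is max
        have hi : i < m := by omega
        rw [ext2Perm_val_m' σ hj hjm, ext2Perm_val_eq σ i (by omega) hi] at w2
        have := (σ ⟨i, hi⟩).isLt
        omega
      · -- j = m+1 : value m, but value at i is < m
        have hi : i < m := by omega
        rw [ext2Perm_val_m1' σ hj hjm, ext2Perm_val_eq σ i (by omega) hi] at w2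
        have := (σ ⟨i, hi⟩).isLt
        omega
    · intro a b c ha hb hc hab hbc v1 v2
      rcases (by omega : c < m ∨ c = m ∨ c = m+1) with hcm | hcm | hcm
      · have ham : a < m := by omega
        have hbm : b < m := by omega
        rw [ext2Perm_val_eq σ b hb hbm, ext2Perm_val_eq σ a ha ham] at v1
        rw [ext2Perm_val_eq σ c hc hcm, ext2Perm_val_eq σ b hb hbm] at v2
        exact h1 a b c ham hbm hcm hab hbc v1 v2
      · have hbm : b < m := by omega
        rw [ext2Perm_val_m' σ hc hcm, ext2Perm_val_eq σ b hb hbm] at v2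
        have := (σ ⟨b, hbm⟩).isLt
        omega
      · rcases (by omega : b < m ∨ b = m) with hbm | hbm
        · rw [ext2Perm_val_m1' σ hc hcm, ext2Perm_val_eq σ b hb hbm] at v2
          have := (σ ⟨b, hbm⟩).isLt
          omega
        · have ham : a < m := by omega
          rw [ext2Perm_val_m' σ hb hbm, ext2Perm_val_eq σ a ha ham] at v1
          have := (σ ⟨a, ham⟩).isLt
          omega
    · intro a b c d ha hb hc hd hab hbc hcd v1 v2 v3
      rcases (by omega : d < m ∨ d = m ∨ d = m+1) with hdm | hdm | hdm
      · have ham : a < m := by omega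
        have hbm : b < m := by omega
        have hcm : c < m := by omega
        rw [ext2Perm_val_eq σ a ha ham, ext2Perm_val_eq σ c hc hcm] at v1
        rw [ext2Perm_val_eq σ c hc hcm, ext2Perm_val_eq σ d hd hdm] at v2
        rw [ext2Perm_val_eq σ d hd hdm, ext2Perm_val_eq σ b hb hbm] at v3
        exact h2 a b c d ham hbm hcm hdm hab hbc hcd v1 v2 v3
      · have hbm : b < m := by omega
        rw [ext2Perm_val_m' σ hd hdm, ext2Perm_val_eq σ b hb hbm] at v3
        have := (σ ⟨b, hbm⟩).isLt
        omega
      · rcases (by omega : b < m ∨ b = m) with hbm | hbm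
        · rw [ext2Perm_val_m1' σ hd hdm, ext2Perm_val_eq σ b hb hbm] at v3
          have := (σ ⟨b, hbm⟩).isLt
          omega
        · -- b = m, then c with m < c < m+1 : impossible
          omega
    · intro a b c d ha hb hc hd hab hbc hcd v1 v2 v3
      rcases (by omega : d < m ∨ d = m ∨ d = m+1) with hdm | hdm | hdm
      · have ham : a < m := by omega
        have hbm : b < m := by omega
        have hcm : c < m := by omega
        rw [ext2Perm_val_eq σ b hb hbm, ext2Perm_val_eq σ c hc hcm] at v1
        rw [ext2Perm_val_eq σ c hc hcm, ext2Perm_val_eq σ d hd hdm] at v2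
        rw [ext2Perm_val_eq σ d hd hdm, ext2Perm_val_eq σ a ha ham] at v3
        exact h3 a b c d ham hbm hcm hdm hab hbc hcd v1 v2 v3
      · have ham : a < m := by omega
        rw [ext2Perm_val_m' σ hd hdm, ext2Perm_val_eq σ a ha ham] at v3
        have := (σ ⟨a, ham⟩).isLt
        omega
      · have ham : a < m := by omega
        rw [ext2Perm_val_m1' σ hd hdm, ext2Perm_val_eq σ a ha ham] at v3
        have := (σ ⟨a, ham⟩).isLt
        omega

end ExtE

/-! ### Part F : specialPerm ∈ FS -/

lemma specialPerm_mem (m : ℕ) : specialPerm m ∈ FS (m+3) := by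
  rw [mem_FS_iff]
  refine ⟨?_, ?_, ?_, ?_⟩
  · intro i j hij hj w1 w2 we
    have hi : i < m+3 := by omega
    have hi1 : i+1 < m+3 := by omega
    rw [specialPerm_val m i hi, specialPerm_val m (i+1) hi1] at w1
    rw [specialPerm_val m j hj, specialPerm_val m i hi] at w2
    rw [specialPerm_val m i hi, specialPerm_val m j hj] at we
    split_ifs at w1 w2 we <;> omega
  · intro a b c ha hb hc hab hbc v1 v2
    rw [specialPerm_val m b hb, specialPerm_val m a ha] at v1
    rw [specialPerm_val m c hc, specialPerm_val m b hb] at v2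
    split_ifs at v1 v2 <;> omega
  · intro a b c d ha hb hc hd hab hbc hcd v1 v2 v3
    rw [specialPerm_val m a ha, specialPerm_val m c hc] at v1
    rw [specialPerm_val m c hc, specialPerm_val m d hd] at v2
    rw [specialPerm_val m d hd, specialPerm_val m b hb] at v3
    split_ifs at v1 v2 v3 <;> omega
  · intro a b c d ha hb hc hd hab hbc hcd v1 v2 v3
    rw [specialPerm_val m b hb, specialPerm_val m c hc] at v1
    rw [specialPerm_val m c hc, specialPerm_val m d hd] at v2
    rw [specialPerm_val m d hd, specialPerm_val m a ha] at v3
    split_ifs at v1 v2 v3 <;> omega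

/-! ### Part G : trichotomy -/

section Tri
variable {m : ℕ}

lemma trichotomy (π : Perm (Fin (m+4))) (h : π ∈ FS (m+4)) :
    (π ⟨m+3, by omega⟩ : ℕ) = m+3 ∨
    ((π ⟨m+2, by omega⟩ : ℕ) = m+3 ∧ (π ⟨m+3, by omega⟩ : ℕ) = m+2) ∨
    π = specialPerm (m+1) := by
  obtain ⟨hF, h321, h1423, h4123⟩ := (mem_FS_iff π).mp h
  have hF' : ∀ i j : ℕ, ∀ (hi : i < m+4) (hi1 : i+1 < m+4) (hj : j < m+4), i+1 < j →
      (π ⟨i,hi⟩:ℕ) < π ⟨i+1,hi1⟩ → (π ⟨j,hj⟩:ℕ) < π ⟨i,hi⟩ →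
      (π ⟨i,hi⟩:ℕ) = (π ⟨j,hj⟩:ℕ) + 1 → False := by
    intro i j hi hi1 hj hij w1 w2 we
    exact hF i j hij hj w1 w2 we
  have posval : ∀ y : ℕ, ∀ hy : y < m+4, ∃ Q : ℕ, ∃ hQ : Q < m+4, (π ⟨Q,hQ⟩:ℕ) = y := by
    intro y hy
    refine ⟨(π.symm ⟨y,hy⟩ : ℕ), (π.symm ⟨y,hy⟩).isLt, ?_⟩
    rw [Fin.eta, Equiv.apply_symm_apply]
  have h3 : (m+3:ℕ) < m+4 := by omega
  have h2 : (m+2:ℕ) < m+4 := by omega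
  by_cases htop : (π ⟨m+3, h3⟩ : ℕ) = m+3
  · left; exact htop
  -- position of the maximum value m+3
  obtain ⟨P, hP, hPval⟩ := posval (m+3) (by omega)
  have val_congr : ∀ i j : ℕ, ∀ (hi : i < m+4) (hj : j < m+4), i = j →
      (π ⟨i,hi⟩:ℕ) = π ⟨j,hj⟩ := by
    intro i j hi hj he
    subst he
    rfl
  have hPne : P ≠ m+3 := fun he => htop ((val_congr (m+3) P h3 hP he.symm).trans hPval)
  -- values at non-P positions are < m+3
  have hlt : ∀ x : ℕ, ∀ hx : x < m+4, x ≠ P → (π ⟨x,hx⟩:ℕ) < m+3 := by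
    intro x hx hne
    have h1 := val_ne π hx hP hne
    have h2 := (π ⟨x,hx⟩).isLt
    omega
  -- tail after P is increasing
  have tail : ∀ x y : ℕ, ∀ (hx : x < m+4) (hy : y < m+4), P < x → x < y →
      (π ⟨x,hx⟩:ℕ) < π ⟨y,hy⟩ := by
    intro x y hx hy hPx hxy
    have hne := val_ne π hx hy (by omega)
    rcases lt_or_ge (π ⟨x,hx⟩:ℕ) (π ⟨y,hy⟩:ℕ) with hlt' | hge
    · exact hlt'
    · exfalso
      refine h321 P x y hP hx hy hPx hxy ?_ ?_
      · exact lt_of_lt_of_le (hlt x hx (by omega)) (le_of_eq hPval.symm)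
      · omega
  -- P ≥ m+1
  have hPge : m+1 ≤ P := by
    by_contra hc
    push_neg at hc
    refine h4123 P (P+1) (P+2) (P+3) hP (by omega) (by omega) (by omega)
      (by omega) (by omega) (by omega) ?_ ?_ ?_
    · exact tail (P+1) (P+2) (by omega) (by omega) (by omega) (by omega)
    · exact tail (P+2) (P+3) (by omega) (by omega) (by omega) (by omega)
    · exact lt_of_lt_of_le (hlt (P+3) _ (by omega)) (le_of_eq hPval.symm)
  -- case P = m+1 : impossible
  have hPcase : P = m+1 ∨ P = m+2 := by omega
  rcases hPcase with hPm | hPm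
  · exfalso
    have hm1 : m+1 < m+4 := by omega
    have hPv : (π ⟨m+1, hm1⟩:ℕ) = m+3 := (val_congr (m+1) P hm1 hP hPm.symm).trans hPval
    have huv : (π ⟨m+2,h2⟩:ℕ) < π ⟨m+3,h3⟩ := tail (m+2) (m+3) h2 h3 (by omega) (by omega)
    have hvlt : (π ⟨m+3,h3⟩:ℕ) < m+3 := hlt (m+3) h3 (by omega)
    -- first : value at m+2 is 0
    have hu0 : (π ⟨m+2,h2⟩:ℕ) = 0 := by
      by_contra hc
      obtain ⟨Q, hQ, hQv⟩ := posval 0 (by omega)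
      have hQne2 : Q ≠ m+2 := fun he => hc ((val_congr (m+2) Q h2 hQ he.symm).trans hQv)
      have hQne1 : Q ≠ m+1 := fun he => by
        have := val_congr Q (m+1) hQ hm1 he; omega
      have hQne3 : Q ≠ m+3 := fun he => by
        have := val_congr Q (m+3) hQ h3 he; omega
      have hQlt : Q < m+1 := by omega
      exact h1423 Q (m+1) (m+2) (m+3) hQ hm1 h2 h3 hQlt (by omega) (by omega)
        (by omega) huv (by omega)
    -- value at m+3 is ≥ 1
    rcases (by omega : (π ⟨m+3,h3⟩:ℕ) = 1 ∨ 2 ≤ (π ⟨m+3,h3⟩:ℕ)) with hv1 | hv2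
    · -- v = 1 : use position of value 2
      obtain ⟨Q, hQ, hQv⟩ := posval 2 (by omega)
      have hQne1 : Q ≠ m+1 := fun he => by
        have := val_congr Q (m+1) hQ hm1 he; omega
      have hQne2 : Q ≠ m+2 := fun he => by
        have := val_congr Q (m+2) hQ h2 he; omega
      have hQne3 : Q ≠ m+3 := fun he => by
        have := val_congr Q (m+3) hQ h3 he; omega
      have hQm : Q < m+1 := by omega
      have hQ1lt : Q+1 < m+4 := by omega
      have hasc : (π ⟨Q,hQ⟩:ℕ) < π ⟨Q+1, hQ1lt⟩ := by
        by_cases hq1 : Q+1 = m+1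
        · have := val_congr (Q+1) (m+1) hQ1lt hm1 hq1
          omega
        · have n0 := val_ne π hQ1lt h2 (show Q+1 ≠ m+2 by omega)
          have n1 := val_ne π hQ1lt h3 (show Q+1 ≠ m+3 by omega)
          have n2 := val_ne π hQ1lt hQ (show Q+1 ≠ Q by omega)
          omega
      exact hF' Q (m+3) hQ hQ1lt h3 (by omega) hasc (by omega) (by omega)
    · -- v ≥ 2 : use position of value 1
      obtain ⟨Q, hQ, hQv⟩ := posval 1 (by omega)
      have hQne1 : Q ≠ m+1 := fun he => by
        have := val_congr Q (m+1) hQ hm1 he; omega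
      have hQne2 : Q ≠ m+2 := fun he => by
        have := val_congr Q (m+2) hQ h2 he; omega
      have hQne3 : Q ≠ m+3 := fun he => by
        have := val_congr Q (m+3) hQ h3 he; omega
      have hQm : Q < m+1 := by omega
      have hQ1lt : Q+1 < m+4 := by omega
      have hasc : (π ⟨Q,hQ⟩:ℕ) < π ⟨Q+1, hQ1lt⟩ := by
        by_cases hq1 : Q+1 = m+1
        · have := val_congr (Q+1) (m+1) hQ1lt hm1 hq1
          omega
        · have n0 := val_ne π hQ1lt h2 (show Q+1 ≠ m+2 by omega)
          have n2 := val_ne π hQ1lt hQ (show Q+1 ≠ Q by omega)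
          omega
      exact hF' Q (m+2) hQ hQ1lt h2 (by omega) hasc (by omega) (by omega)
  -- case P = m+2
  · by_cases hv : (π ⟨m+3, h3⟩ : ℕ) = m+2
    · right; left
      constructor
      · exact (val_congr (m+2) P h2 hP hPm.symm).trans hPval
      · exact hv
    · right; right
      have hm1 : m+1 < m+4 := by omega
      have h0lt : (0:ℕ) < m+4 := by omega
      have h1lt : (1:ℕ) < m+4 := by omega
      have hPv2 : (π ⟨m+2, h2⟩:ℕ) = m+3 := (val_congr (m+2) P h2 hP hPm.symm).trans hPval
      have hvlt : (π ⟨m+3,h3⟩:ℕ) < m+3 := hlt (m+3) h3 (by omega)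
      have hvlt2 : (π ⟨m+3,h3⟩:ℕ) < m+2 := by omega
      -- position S of value v+1
      obtain ⟨S, hS, hSv⟩ := posval ((π ⟨m+3,h3⟩:ℕ)+1) (by omega)
      have hSne2 : S ≠ m+2 := fun he => by
        have := val_congr S (m+2) hS h2 he; omega
      have hSne3 : S ≠ m+3 := fun he => by
        have := val_congr S (m+3) hS h3 he; omega
      have hSne1 : S ≠ m+1 := by
        intro he
        have hx := val_congr (m+1) S hm1 hS he.symm
        have hx2 : (π ⟨m+1+1, h2⟩:ℕ) = π ⟨m+2, h2⟩ := val_congr (m+1+1) (m+2) h2 h2 (by omega)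
        exact hF' (m+1) (m+3) hm1 h2 h3 (by omega) (by omega) (by omega) (by omega)
      have hSm : S < m+1 := by omega
      have hS1lt : S+1 < m+4 := by omega
      -- descent at S
      have hdesc : (π ⟨S+1,hS1lt⟩:ℕ) < π ⟨m+3,h3⟩ := by
        by_contra hc
        push_neg at hc
        have n1 := val_ne π hS1lt h3 (show S+1 ≠ m+3 by omega)
        have n2 := val_ne π hS1lt hS (show S+1 ≠ S by omega)
        exact hF' S (m+3) hS hS1lt h3 (by omega) (by omega) (by omega) (by omega)
      -- value at S+1 is 0
      have hu0 : (π ⟨S+1,hS1lt⟩:ℕ) = 0 := by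
        by_contra hc
        obtain ⟨R, hR, hRv⟩ := posval 0 (by omega)
        have hRneS : R ≠ S := fun he => by
          have := val_congr R S hR hS he; omega
        have hRneS1 : R ≠ S+1 := fun he => by
          have := val_congr R (S+1) hR hS1lt he; omega
        have hRne2 : R ≠ m+2 := fun he => by
          have := val_congr R (m+2) hR h2 he; omega
        have hRne3 : R ≠ m+3 := fun he => by
          have := val_congr R (m+3) hR h3 he; omega
        rcases (by omega : R < S ∨ S+1 < R) with hRS | hRS
        · exact h1423 R S (S+1) (m+3) hR hS hS1lt h3 hRS (by omega) (by omega)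
            (by omega) (by omega) (by omega)
        · exact h321 S (S+1) R hS hS1lt hR (by omega) hRS (by omega) (by omega)
      -- value at m+3 is 1
      have hv1 : (π ⟨m+3,h3⟩:ℕ) = 1 := by
        by_contra hc
        have hge2 : 2 ≤ (π ⟨m+3,h3⟩:ℕ) := by omega
        obtain ⟨Q, hQ, hQv⟩ := posval 1 (by omega)
        have hQneS : Q ≠ S := fun he => by
          have := val_congr Q S hQ hS he; omega
        have hQneS1 : Q ≠ S+1 := fun he => by
          have := val_congr Q (S+1) hQ hS1lt he; omega
        have hQne2 : Q ≠ m+2 := fun he => by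
          have := val_congr Q (m+2) hQ h2 he; omega
        have hQne3 : Q ≠ m+3 := fun he => by
          have := val_congr Q (m+3) hQ h3 he; omega
        rcases (by omega : Q < S ∨ S+1 < Q) with hQS | hQS
        · have hQ1lt : Q+1 < m+4 := by omega
          have hasc : (π ⟨Q,hQ⟩:ℕ) < π ⟨Q+1, hQ1lt⟩ := by
            by_cases hq1 : Q+1 = S
            · have := val_congr (Q+1) S hQ1lt hS hq1
              omega
            · have n0 := val_ne π hQ1lt hS1lt (show Q+1 ≠ S+1 by omega)
              have n2 := val_ne π hQ1lt hQ (show Q+1 ≠ Q by omega)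
              omega
          exact hF' Q (S+1) hQ hQ1lt hS1lt (by omega) hasc (by omega) (by omega)
        · exact h4123 S (S+1) Q (m+3) hS hS1lt hQ h3 (by omega) hQS (by omega)
            (by omega) (by omega) (by omega)
      -- S = 0
      have hS0 : S = 0 := by
        by_contra hc
        have n2 := val_ne π h0lt hS (show (0:ℕ) ≠ S by omega)
        have n0 := val_ne π h0lt hS1lt (show (0:ℕ) ≠ S+1 by omega)
        have nM := val_ne π h0lt h2 (show (0:ℕ) ≠ m+2 by omega)
        have n1 := val_ne π h0lt h3 (show (0:ℕ) ≠ m+3 by omega)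
        have hb := (π ⟨0,h0lt⟩).isLt
        exact h321 0 S (S+1) h0lt hS hS1lt (by omega) (by omega) (by omega) (by omega)
      have h0v : (π ⟨0,h0lt⟩:ℕ) = 2 := by
        have := val_congr 0 S h0lt hS hS0.symm; omega
      have h1v : (π ⟨1,h1lt⟩:ℕ) = 0 := by
        have := val_congr 1 (S+1) h1lt hS1lt (by omega); omega
      -- bounds for middle values
      have hbound : ∀ i : ℕ, ∀ hi : i < m+4, 2 ≤ i → i ≤ m+1 →
          3 ≤ (π ⟨i,hi⟩:ℕ) ∧ (π ⟨i,hi⟩:ℕ) ≤ m+2 := by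
        intro i hi hi2 hi1
        have n2 := val_ne π hi h0lt (show i ≠ 0 by omega)
        have n0 := val_ne π hi h1lt (show i ≠ 1 by omega)
        have nM := val_ne π hi h2 (show i ≠ m+2 by omega)
        have n1 := val_ne π hi h3 (show i ≠ m+3 by omega)
        have hb := (π ⟨i,hi⟩).isLt
        omega
      -- middle values are increasing
      have hmono : ∀ i j : ℕ, ∀ (hi : i < m+4) (hj : j < m+4), 2 ≤ i → i < j → j ≤ m+1 →
          (π ⟨i,hi⟩:ℕ) < π ⟨j,hj⟩ := by
        intro i j hi hj hi2 hij hj1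
        by_contra hc
        push_neg at hc
        have hne := val_ne π hi hj (by omega)
        have hbj := hbound j hj (by omega) hj1
        exact h321 i j (m+3) hi hj h3 hij (by omega) (by omega) (by omega)
      -- lower bound by induction
      have hlow : ∀ k : ℕ, ∀ i : ℕ, ∀ hi : i < m+4, i = 2 + k → i ≤ m+1 →
          i + 1 ≤ (π ⟨i,hi⟩:ℕ) := by
        intro k
        induction k with
        | zero =>
          intro i hi he hle
          have := hbound i hi (by omega) hle
          omega
        | succ k ih =>
          intro i hi he hle
          have hi1 : i - 1 < m+4 := by omega
          have hprev := ih (i-1) hi1 (by omega) (by omega)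
          have hm := hmono (i-1) i hi1 hi (by omega) (by omega) (by omega)
          omega
      -- upper bound by induction
      have hup : ∀ k : ℕ, ∀ i : ℕ, ∀ hi : i < m+4, i + k = m+1 → 2 ≤ i →
          (π ⟨i,hi⟩:ℕ) ≤ i + 1 := by
        intro k
        induction k with
        | zero =>
          intro i hi he h2i
          have := hbound i hi h2i (by omega)
          omega
        | succ k ih =>
          intro i hi he h2i
          have hi1 : i + 1 < m+4 := by omega
          have hprev := ih (i+1) hi1 (by omega) (by omega)
          have hm := hmono i (i+1) hi hi1 (by omega) (by omega) (by omega)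
          omega
      have hmid : ∀ i : ℕ, ∀ hi : i < m+4, 2 ≤ i → i ≤ m+1 → (π ⟨i,hi⟩:ℕ) = i+1 := by
        intro i hi h2i hi1
        have hl := hlow (i-2) i hi (by omega) hi1
        have hu := hup (m+1-i) i hi (by omega) h2i
        omega
      -- conclude
      refine Equiv.ext fun x => ?_
      rcases x with ⟨x, hx⟩
      apply Fin.ext
      rw [specialPerm_val (m+1) x hx]
      split_ifs with e0 e1 e2
      · have := val_congr x 0 hx h0lt e0; omega
      · have := val_congr x 1 hx h1lt e1; omega
      · have := val_congr x (m+3) hx h3 (by omega); omega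
      · by_cases hxm : x = m+2
        · have := val_congr x (m+2) hx h2 hxm; omega
        · have := hmid x hx (by omega) (by omega); omega

end Tri

/-! ### Part H : surjectivity, small cases -/

section PartH
variable {m : ℕ}

lemma posval' {n : ℕ} (π : Perm (Fin n)) (y : ℕ) (hy : y < n) :
    ∃ Q : ℕ, ∃ hQ : Q < n, (π ⟨Q,hQ⟩:ℕ) = y := by
  refine ⟨(π.symm ⟨y,hy⟩ : ℕ), (π.symm ⟨y,hy⟩).isLt, ?_⟩
  rw [Fin.eta, Equiv.apply_symm_apply]

lemma val_congr' {n : ℕ} (π : Perm (Fin n)) (i j : ℕ) (hi : i < n) (hj : j < n)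
    (he : i = j) : (π ⟨i,hi⟩:ℕ) = π ⟨j,hj⟩ := by
  subst he; rfl

lemma exists_extPerm (π : Perm (Fin (m+1))) (h : (π ⟨m, Nat.lt_succ_self m⟩:ℕ) = m) :
    ∃ σ : Perm (Fin m), π = extPerm σ := by
  have key : ∀ i : Fin m, (π ⟨(i:ℕ), Nat.lt_succ_of_lt i.isLt⟩ : ℕ) < m := by
    intro i
    have hb := (π ⟨(i:ℕ), Nat.lt_succ_of_lt i.isLt⟩).isLt
    have hne := val_ne π (Nat.lt_succ_of_lt i.isLt) (Nat.lt_succ_self m)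
      (show (i:ℕ) ≠ m from by omega)
    omega
  have hinj : Function.Injective
      (fun i : Fin m => (⟨(π ⟨(i:ℕ), Nat.lt_succ_of_lt i.isLt⟩ : ℕ), key i⟩ : Fin m)) := by
    intro x y hxy
    have hv : (π ⟨(x:ℕ), Nat.lt_succ_of_lt x.isLt⟩ : ℕ)
        = π ⟨(y:ℕ), Nat.lt_succ_of_lt y.isLt⟩ := congrArg (fun z : Fin m => (z:ℕ)) hxy
    have := π.injective (Fin.ext hv)
    exact Fin.ext (congrArg (fun z : Fin (m+1) => (z:ℕ)) this)
  refine ⟨Equiv.ofBijective _ (Finite.injective_iff_bijective.mp hinj), ?_⟩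
  apply Equiv.ext
  rintro ⟨x, hx⟩
  apply Fin.ext
  rw [extPerm_val _ x hx]
  by_cases hxm : x < m
  · rw [dif_pos hxm]
    rfl
  · rw [dif_neg hxm]
    have := val_congr' π x m hx (Nat.lt_succ_self m) (by omega)
    omega

lemma exists_ext2Perm (π : Perm (Fin (m+2)))
    (h1 : (π ⟨m, by omega⟩:ℕ) = m+1) (h2 : (π ⟨m+1, by omega⟩:ℕ) = m) :
    ∃ σ : Perm (Fin m), π = ext2Perm σ := by
  have hmlt : m < m+2 := by omega
  have hm1lt : m+1 < m+2 := by omega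
  have key : ∀ i : Fin m, (π ⟨(i:ℕ), by omega⟩ : ℕ) < m := by
    intro i
    have hb := (π ⟨(i:ℕ), by omega⟩).isLt
    have hne1 := val_ne π (show (i:ℕ) < m+2 by omega) hmlt (show (i:ℕ) ≠ m from by omega)
    have hne2 := val_ne π (show (i:ℕ) < m+2 by omega) hm1lt (show (i:ℕ) ≠ m+1 from by omega)
    omega
  have hinj : Function.Injective
      (fun i : Fin m => (⟨(π ⟨(i:ℕ), by omega⟩ : ℕ), key i⟩ : Fin m)) := by
    intro x y hxy
    have hv : (π ⟨(x:ℕ), by omega⟩ : ℕ)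
        = π ⟨(y:ℕ), by omega⟩ := congrArg (fun z : Fin m => (z:ℕ)) hxy
    have := π.injective (Fin.ext hv)
    exact Fin.ext (congrArg (fun z : Fin (m+2) => (z:ℕ)) this)
  refine ⟨Equiv.ofBijective _ (Finite.injective_iff_bijective.mp hinj), ?_⟩
  apply Equiv.ext
  rintro ⟨x, hx⟩
  apply Fin.ext
  rw [ext2Perm_val _ x hx]
  by_cases hxm : x < m
  · rw [dif_pos hxm]
    rfl
  · rw [dif_neg hxm]
    by_cases hxe : x = m
    · rw [if_pos hxe]
      have := val_congr' π x m hx hmlt hxe; omega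
    · rw [if_neg hxe]
      have := val_congr' π x (m+1) hx hm1lt (by omega); omega

/-- trichotomy for n = 3 -/
lemma trichotomy3 (π : Perm (Fin 3)) (h : π ∈ FS 3) :
    (π ⟨2, by omega⟩ : ℕ) = 2 ∨
    ((π ⟨1, by omega⟩ : ℕ) = 2 ∧ (π ⟨2, by omega⟩ : ℕ) = 1) ∨
    π = specialPerm 0 := by
  obtain ⟨hF, h321, h1423, h4123⟩ := (mem_FS_iff π).mp h
  have h0 : (0:ℕ) < 3 := by omega
  have h1 : (1:ℕ) < 3 := by omega
  have h2 : (2:ℕ) < 3 := by omega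
  obtain ⟨P, hP, hPval⟩ := posval' π 2 (by omega)
  have b0 := (π ⟨0, h0⟩).isLt
  have b1 := (π ⟨1, h1⟩).isLt
  have b2 := (π ⟨2, h2⟩).isLt
  have n01 := val_ne π h0 h1 (by omega)
  have n02 := val_ne π h0 h2 (by omega)
  have n12 := val_ne π h1 h2 (by omega)
  rcases (by omega : P = 0 ∨ P = 1 ∨ P = 2) with hPe | hPe | hPe
  · -- value 2 at position 0 : must be specialPerm 0
    have h0v : (π ⟨0,h0⟩:ℕ) = 2 := (val_congr' π 0 P h0 hP hPe.symm).trans hPval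
    -- then π1, π2 ∈ {0,1}; if π1 = 1, π2 = 0 : 321
    rcases (by omega : ((π ⟨1,h1⟩:ℕ) = 0 ∧ (π ⟨2,h2⟩:ℕ) = 1) ∨
        ((π ⟨1,h1⟩:ℕ) = 1 ∧ (π ⟨2,h2⟩:ℕ) = 0)) with ⟨ha, hb⟩ | ⟨ha, hb⟩
    · right; right
      refine Equiv.ext fun x => ?_
      rcases x with ⟨x, hx⟩
      apply Fin.ext
      rw [specialPerm_val 0 x hx]
      split_ifs with e0 e1 e2
      · have := val_congr' π x 0 hx h0 e0; omega
      · have := val_congr' π x 1 hx h1 e1; omega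
      · have := val_congr' π x 2 hx h2 (by omega); omega
      · omega
    · exact absurd (h321 0 1 2 h0 h1 h2 (by omega) (by omega) (by omega) (by omega)) id
  · -- value 2 at position 1
    have h1v : (π ⟨1,h1⟩:ℕ) = 2 := (val_congr' π 1 P h1 hP hPe.symm).trans hPval
    rcases (by omega : ((π ⟨2,h2⟩:ℕ) = 1) ∨ ((π ⟨0,h0⟩:ℕ) = 1 ∧ (π ⟨2,h2⟩:ℕ) = 0))
      with hb | ⟨ha, hb⟩
    · right; left; exact ⟨h1v, hb⟩
    · have e01 : (π ⟨0+1, by omega⟩:ℕ) = π ⟨1, h1⟩ := val_congr' π (0+1) 1 (by omega) h1 rfl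
      exact absurd (hF 0 2 (by omega) (by omega) (by omega) (by omega) (by omega)) id
  · left; exact (val_congr' π 2 P h2 hP hPe.symm).trans hPval

end PartH


/-! ### Part I : counting -/

section PartI

lemma extPerm_inj {m : ℕ} : Function.Injective (extPerm (m := m)) := by
  intro σ τ he
  apply Equiv.ext
  intro i
  apply Fin.ext
  have e1 := extPerm_val_eq σ (i:ℕ) (by omega) i.isLt
  have e2 := extPerm_val_eq τ (i:ℕ) (by omega) i.isLt
  rw [Fin.eta] at e1 e2
  rw [← e1, ← e2, he]

lemma ext2Perm_inj {m : ℕ} : Function.Injective (ext2Perm (m := m)) := by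
  intro σ τ he
  apply Equiv.ext
  intro i
  apply Fin.ext
  have e1 := ext2Perm_val_eq σ (i:ℕ) (by omega) i.isLt
  have e2 := ext2Perm_val_eq τ (i:ℕ) (by omega) i.isLt
  rw [Fin.eta] at e1 e2
  rw [← e1, ← e2, he]

lemma FS_decomp (m : ℕ) :
    FS (m+3) = (extPerm '' FS (m+2)) ∪ (ext2Perm '' FS (m+1)) ∪ {specialPerm m} := by
  ext π
  simp only [Set.mem_union, Set.mem_image, Set.mem_singleton_iff]
  constructor
  · intro hπ
    have htri : (π ⟨m+2, by omega⟩ : ℕ) = m+2 ∨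
        ((π ⟨m+1, by omega⟩ : ℕ) = m+2 ∧ (π ⟨m+2, by omega⟩ : ℕ) = m+1) ∨
        π = specialPerm m := by
      cases m with
      | zero => exact trichotomy3 π hπ
      | succ k => exact trichotomy (m := k) π hπ
    rcases htri with h | ⟨ha, hb⟩ | h
    · obtain ⟨σ, hσeq⟩ := exists_extPerm (m := m+2) π h
      exact Or.inl (Or.inl ⟨σ, (extPerm_mem σ).mp (hσeq ▸ hπ), hσeq.symm⟩)
    · obtain ⟨σ, hσeq⟩ := exists_ext2Perm (m := m+1) π ha hb
      exact Or.inl (Or.inr ⟨σ, (ext2Perm_mem σ).mp (hσeq ▸ hπ), hσeq.symm⟩)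
    · exact Or.inr h
  · rintro ((⟨σ, hσ, rfl⟩ | ⟨σ, hσ, rfl⟩) | rfl)
    · exact (extPerm_mem σ).mpr hσ
    · exact (ext2Perm_mem σ).mpr hσ
    · exact specialPerm_mem m

lemma FS_card (m : ℕ) : (FS (m+3)).ncard = (FS (m+2)).ncard + (FS (m+1)).ncard + 1 := by
  have hd1 : Disjoint (extPerm '' FS (m+2)) (ext2Perm '' FS (m+1)) := by
    rw [Set.disjoint_left]
    rintro π ⟨σ, _, rfl⟩ ⟨τ, _, hτ⟩
    have e1 : ((extPerm σ) ⟨m+2, by omega⟩:ℕ) = m+2 :=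
      extPerm_val_top σ (m+2) (by omega) (by omega)
    have e2 : ((ext2Perm τ) ⟨m+2, by omega⟩:ℕ) = m+1 :=
      ext2Perm_val_m1' τ (by omega) (by omega)
    rw [hτ] at e2
    omega
  have hd2 : Disjoint ((extPerm '' FS (m+2)) ∪ (ext2Perm '' FS (m+1))) {specialPerm m} := by
    rw [Set.disjoint_right]
    rintro π rfl
    rintro ((⟨σ, _, hσ⟩ | ⟨σ, _, hσ⟩))
    · have e1 : ((extPerm σ) ⟨m+2, by omega⟩:ℕ) = m+2 :=
        extPerm_val_top σ (m+2) (by omega) (by omega)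
      have e2 : ((specialPerm m) ⟨m+2, by omega⟩:ℕ) = 1 := by
        rw [specialPerm_val m (m+2) (by omega), if_neg (by omega), if_neg (by omega),
          if_pos rfl]
      rw [hσ] at e1
      omega
    · rcases Nat.eq_zero_or_pos m with hm | hm
      · subst hm
        have e1 : ((ext2Perm σ) ⟨1, by omega⟩:ℕ) = 2 := ext2Perm_val_m' σ (by omega) rfl
        have e2 : ((specialPerm 0) ⟨1, by omega⟩:ℕ) = 0 := by
          rw [specialPerm_val 0 1 (by omega), if_neg (by omega), if_pos rfl]
        rw [hσ] at e1
        omega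
      · have e1 : ((ext2Perm σ) ⟨m+2, by omega⟩:ℕ) = m+1 := ext2Perm_val_m1' σ (by omega) rfl
        have e2 : ((specialPerm m) ⟨m+2, by omega⟩:ℕ) = 1 := by
          rw [specialPerm_val m (m+2) (by omega), if_neg (by omega), if_neg (by omega),
            if_pos rfl]
        rw [hσ] at e1
        omega
  rw [FS_decomp m, Set.ncard_union_eq hd2 (Set.toFinite _) (Set.toFinite _),
    Set.ncard_union_eq hd1 (Set.toFinite _) (Set.toFinite _),
    Set.ncard_image_of_injective _ extPerm_inj,
    Set.ncard_image_of_injective _ ext2Perm_inj,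
    Set.ncard_singleton]

lemma FS1_card : (FS 1).ncard = 1 := by
  have he : FS 1 = Set.univ := by
    ext π
    simp only [Set.mem_univ, iff_true]
    rw [mem_FS_iff]
    refine ⟨?_, ?_, ?_, ?_⟩
    · intro i j hij hj _ _ _; omega
    · intro a b c ha hb hc hab hbc _ _; omega
    · intro a b c d ha hb hc hd hab hbc hcd _ _ _; omega
    · intro a b c d ha hb hc hd hab hbc hcd _ _ _; omega
  rw [he, Set.ncard_univ, Nat.card_eq_fintype_card, Fintype.card_perm]
  simp

lemma FS2_card : (FS 2).ncard = 2 := by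
  have he : FS 2 = Set.univ := by
    ext π
    simp only [Set.mem_univ, iff_true]
    rw [mem_FS_iff]
    refine ⟨?_, ?_, ?_, ?_⟩
    · intro i j hij hj _ _ _; omega
    · intro a b c ha hb hc hab hbc _ _; omega
    · intro a b c d ha hb hc hd hab hbc hcd _ _ _; omega
    · intro a b c d ha hb hc hd hab hbc hcd _ _ _; omega
  rw [he, Set.ncard_univ, Nat.card_eq_fintype_card, Fintype.card_perm]
  simp

lemma FS_count : ∀ n : ℕ, 1 ≤ n → (FS n).ncard = Nat.fib (n+2) - 1 := by
  intro n
  induction n using Nat.strong_induction_on with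
  | _ n ih =>
    intro hn
    match n, hn with
    | 1, _ => rw [FS1_card]; rfl
    | 2, _ => rw [FS2_card]; rfl
    | (k+3), _ =>
      have h1 := ih (k+2) (by omega) (by omega)
      have h2 := ih (k+1) (by omega) (by omega)
      rw [FS_card k, h1, h2]
      have hf : Nat.fib (k+3+2) = Nat.fib (k+1+2) + Nat.fib (k+2+2) := by
        have h := Nat.fib_add_two (n := k+3)
        have e1 : k+3+2 = k+5 := by omega
        have e2 : k+1+2 = k+3 := by omega
        have e3 : k+2+2 = k+4 := by omega
        have e4 : k+3+1 = k+4 := by omega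
        rw [e1] at h ⊢
        rw [e2, e3, e4] at *
        omega
      have p1 : 0 < Nat.fib (k+2+2) := Nat.fib_pos.mpr (by omega)
      have p2 : 0 < Nat.fib (k+1+2) := Nat.fib_pos.mpr (by omega)
      omega

end PartI


theorem fishburn_321_1423_4123 (n : ℕ) (hn : 1 ≤ n) :
    {π : Equiv.Perm (Fin n) | IsFishburn π ∧ Avoids π ![3, 2, 1] ∧ Avoids π ![1, 4, 2, 3] ∧ Avoids π ![4, 1, 2, 3]}.ncard = Nat.fib (n + 2) - 1 := by
  exact FS_count n hn
end
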